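/- arXiv:2511.04303 — 6 statements merged into one kernel-verified Lean document; each statement's English description precedes it below -/
import Mathlib

section
/- Let A ∈ R^{d×d}, f_0(x) = A x - x^∘3 and f(x) = x^∘2 (componentwise powers). Then there exists a constant L such that for all x, z ∈ R^d: 2⟨x - z, f_0(x) - f_0(z)⟩ + ||f(x) - f(z)||^2 ≤ L ||x - z||^2, i.e., the pair (f_0, f) satisfies a one-sided global Lipschitz condition. -/
open scoped RealInnerProductSpace

/-- For `f₀(x) = A x - x^∘3` and `f(x) = x^∘2` (componentwise powers), the pair
`(f₀, f)` satisfies a one-sided global Lipschitz condition: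
`2⟨x - z, f₀(x) - f₀(z)⟩ + ‖f(x) - f(z)‖² ≤ L ‖x - z‖²` for some constant `L`. -/
theorem stmt_3 {d : ℕ} (A : Matrix (Fin d) (Fin d) ℝ)
    (f0 f : EuclideanSpace ℝ (Fin d) → EuclideanSpace ℝ (Fin d))
    (hf0 : ∀ x i, f0 x i = A.mulVec x i - (x i) ^ 3)
    (hf : ∀ x i, f x i = (x i) ^ 2) :
    ∃ L : ℝ, ∀ x z : EuclideanSpace ℝ (Fin d),
      2 * ⟪x - z, f0 x - f0 z⟫ + ‖f x - f z‖ ^ 2 ≤ L * ‖x - z‖ ^ 2 := by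
  let B : EuclideanSpace ℝ (Fin d) →ₗ[ℝ] EuclideanSpace ℝ (Fin d) :=
    { toFun := fun v => (WithLp.toLp 2 (A.mulVec v) : EuclideanSpace ℝ (Fin d))
      map_add' := fun u v => by ext i; simp [Matrix.mulVec, dotProduct, mul_add, Finset.sum_add_distrib]
      map_smul' := fun c v => by ext i; simp [Matrix.mulVec, dotProduct, Finset.mul_sum, mul_left_comm] }
  let T := LinearMap.toContinuousLinearMap B
  refine ⟨2 * ‖T‖, fun x z => ?_⟩
  set w : EuclideanSpace ℝ (Fin d) := x - z with hw
  have hwi : ∀ i, w i = x i - z i := fun i => rfl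
  have hTw : ∀ i, T w i = A.mulVec w i := fun i => rfl
  have h1 : ⟪x - z, f0 x - f0 z⟫
      = ⟪w, T w⟫ - ∑ i, w i * ((x i)^3 - (z i)^3) := by
    rw [PiLp.inner_apply, PiLp.inner_apply, ← Finset.sum_sub_distrib]
    refine Finset.sum_congr rfl fun i _ => ?_
    have h2 : (f0 x - f0 z) i = A.mulVec w i - ((x i)^3 - (z i)^3) := by
      have hs : A.mulVec w = A.mulVec x - A.mulVec z := by
        rw [hw]; exact Matrix.mulVec_sub A x z
      have : A.mulVec w i = A.mulVec x i - A.mulVec z i := by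
        rw [hs]; rfl
      simp only [PiLp.sub_apply, hf0, this]; ring
    simp only [h2, RCLike.inner_apply, conj_trivial, hTw]
    ring
  have h3 : ‖f x - f z‖ ^ 2 = ∑ i, ((x i)^2 - (z i)^2)^2 := by
    rw [← real_inner_self_eq_norm_sq, PiLp.inner_apply]
    refine Finset.sum_congr rfl fun i _ => ?_
    simp only [PiLp.sub_apply, hf, RCLike.inner_apply, conj_trivial]
    ring
  have hsum : ∑ i, (-2 * (w i) * ((x i)^3 - (z i)^3) + ((x i)^2 - (z i)^2)^2) ≤ 0 := by
    refine Finset.sum_nonpos fun i _ => ?_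
    rw [hwi i]
    nlinarith [sq_nonneg (x i - z i), sq_nonneg (x i), sq_nonneg (z i),
      sq_nonneg (x i + z i), mul_nonneg (sq_nonneg (x i - z i)) (add_nonneg (sq_nonneg (x i)) (sq_nonneg (z i)))]
  have hip : ⟪w, T w⟫ ≤ ‖T‖ * ‖w‖ ^ 2 := by
    calc ⟪w, T w⟫ ≤ ‖w‖ * ‖T w‖ := real_inner_le_norm w (T w)
      _ ≤ ‖w‖ * (‖T‖ * ‖w‖) := by
          have := T.le_opNorm w
          exact mul_le_mul_of_nonneg_left this (norm_nonneg w)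
      _ = ‖T‖ * ‖w‖ ^ 2 := by ring
  have hsplit : ∑ i, (-2 * (w i) * ((x i)^3 - (z i)^3) + ((x i)^2 - (z i)^2)^2)
      = -2 * (∑ i, w i * ((x i)^3 - (z i)^3)) + ∑ i, ((x i)^2 - (z i)^2)^2 := by
    rw [Finset.sum_add_distrib, Finset.mul_sum]
    congr 1; exact Finset.sum_congr rfl fun i _ => by ring
  have hw2 : ‖x - z‖ = ‖w‖ := rfl
  rw [h1, h3, hw2]
  nlinarith [hsum, hip, hsplit]
end

section
/- A priori bound under a one-sided linear growth condition (L^2 case): Suppose x : [0,T] → R^d is continuous and satisfies x(t) = x_0 + ∫_0^t f_0(x(s)) ds + ∫_0^t f(x(s)) u(s) ds, where 2⟨x, f_0(x)⟩ + ||f(x)||_F^2 ≤ C(1 + ||x||^2) for all x ∈ R^d, and ||u||_{L^2([0,T])} ≤ R. Then ||x(t)||^2 ≤ (||x_0||^2 + CT) exp(CT + R^2) for all t ∈ [0,T]. -/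
open MeasureTheory
open scoped RealInnerProductSpace Matrix

open Set


lemma parts_aux {t : ℝ} {b c : ℝ → ℝ}
    (hb : IntegrableOn b (Icc 0 t)) (hc : IntegrableOn c (Icc 0 t)) :
    (∫ s in Icc 0 t, b s) * (∫ s in Icc 0 t, c s)
      = (∫ s in Icc 0 t, b s * ∫ a in Icc 0 s, c a)
        + (∫ s in Icc 0 t, c s * ∫ a in Icc 0 s, b a) := by
  set μ := volume.restrict (Icc (0:ℝ) t) with hμ
  have hbc : Integrable (fun p : ℝ × ℝ => b p.1 * c p.2) (μ.prod μ) :=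
    hb.mul_prod hc
  have hD : MeasurableSet {p : ℝ × ℝ | p.2 ≤ p.1} :=
    (isClosed_le continuous_snd continuous_fst).measurableSet
  set F1 : ℝ × ℝ → ℝ := {p : ℝ × ℝ | p.2 ≤ p.1}.indicator (fun p => b p.1 * c p.2) with hF1
  set F2 : ℝ × ℝ → ℝ := {p : ℝ × ℝ | p.2 ≤ p.1}ᶜ.indicator (fun p => b p.1 * c p.2) with hF2
  have hiF1 : Integrable F1 (μ.prod μ) := hbc.indicator hD
  have hiF2 : Integrable F2 (μ.prod μ) := hbc.indicator hD.compl
  have hsplit : (fun p : ℝ × ℝ => b p.1 * c p.2) = F1 + F2 :=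
    (Set.indicator_self_add_compl {p : ℝ × ℝ | p.2 ≤ p.1} (fun p => b p.1 * c p.2)).symm
  have e0 : (∫ s in Icc 0 t, b s) * (∫ s in Icc 0 t, c s)
      = (∫ p, F1 p ∂(μ.prod μ)) + ∫ p, F2 p ∂(μ.prod μ) := by
    rw [← integral_prod_mul]
    rw [show (fun p : ℝ × ℝ => b p.1 * c p.2) = fun p => F1 p + F2 p by
      rw [hsplit]; rfl]
    exact integral_add hiF1 hiF2
  have e1 : (∫ p, F1 p ∂(μ.prod μ)) = ∫ s in Icc 0 t, b s * ∫ a in Icc 0 s, c a := by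
    rw [integral_prod _ hiF1]
    refine setIntegral_congr_fun measurableSet_Icc (fun s hs => ?_)
    have : (fun a => F1 (s, a)) = (Iic s).indicator (fun a => b s * c a) := by
      funext a
      simp only [hF1, Set.indicator_apply, Set.mem_setOf_eq, Set.mem_Iic]
    rw [this, integral_indicator measurableSet_Iic]
    rw [Measure.restrict_restrict measurableSet_Iic]
    have : Iic s ∩ Icc (0:ℝ) t = Icc 0 s := by
      ext a; simp only [Set.mem_inter_iff, Set.mem_Iic, Set.mem_Icc]
      constructor
      · rintro ⟨h1, h2, h3⟩; exact ⟨h2, h1⟩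
      · rintro ⟨h1, h2⟩; exact ⟨h2, h1, h2.trans hs.2⟩
    rw [this, integral_const_mul]
  have e2 : (∫ p, F2 p ∂(μ.prod μ)) = ∫ s in Icc 0 t, c s * ∫ a in Icc 0 s, b a := by
    rw [integral_prod_symm _ hiF2]
    refine setIntegral_congr_fun measurableSet_Icc (fun a ha => ?_)
    have : (fun s => F2 (s, a)) = (Iio a).indicator (fun s => b s * c a) := by
      funext s
      simp only [hF2, Set.indicator_apply, Set.mem_compl_iff, Set.mem_setOf_eq, Set.mem_Iio,
        not_le]
    rw [this, integral_indicator measurableSet_Iio]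
    rw [Measure.restrict_restrict measurableSet_Iio]
    have hset : Iio a ∩ Icc (0:ℝ) t = Ico 0 a := by
      ext s; simp only [Set.mem_inter_iff, Set.mem_Iio, Set.mem_Icc, Set.mem_Ico]
      constructor
      · rintro ⟨h1, h2, h3⟩; exact ⟨h2, h1⟩
      · rintro ⟨h1, h2⟩; exact ⟨h2, h1, h2.le.trans ha.2⟩
    rw [hset, integral_mul_const, ← integral_Icc_eq_integral_Ico, mul_comm]
  rw [e0, e1, e2]

lemma sq_integral_aux {t : ℝ} {q : ℝ → ℝ} (hq : IntegrableOn q (Icc 0 t)) :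
    (∫ s in Icc 0 t, q s) ^ 2 = ∫ s in Icc 0 t, 2 * (q s * ∫ a in Icc 0 s, q a) := by
  rw [sq, parts_aux hq hq, integral_const_mul]; ring

lemma Ik_aux {T : ℝ} {b : ℝ → ℝ} (hb : IntegrableOn b (Icc 0 T))
    (hb0 : ∀ s, 0 ≤ b s) (k : ℕ) :
    ∀ t ∈ Icc (0:ℝ) T,
      IntegrableOn (fun s => b s * (∫ a in Icc 0 s, b a) ^ k) (Icc 0 t)
      ∧ (∫ s in Icc 0 t, b s * (∫ a in Icc 0 s, b a) ^ k)
          = (∫ s in Icc 0 t, b s) ^ (k + 1) / ((k : ℝ) + 1) := by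
  set B : ℝ → ℝ := fun s => ∫ a in Icc (0:ℝ) s, b a with hB
  have hBc : ContinuousOn B (Icc 0 T) := intervalIntegral.continuousOn_primitive_Icc hb
  have hint : ∀ (j : ℕ), ∀ t ∈ Icc (0:ℝ) T,
      IntegrableOn (fun s => b s * B s ^ j) (Icc 0 t) := by
    intro j t ht
    have h1 : IntegrableOn b (Icc 0 t) := hb.mono_set (Icc_subset_Icc_right ht.2)
    have h2 : AEStronglyMeasurable (fun s => B s ^ j) (volume.restrict (Icc 0 t)) := by
      have : ContinuousOn (fun s => B s ^ j) (Icc 0 t) :=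
        (hBc.mono (Icc_subset_Icc_right ht.2)).pow j
      exact this.aestronglyMeasurable measurableSet_Icc
    have h3 : ∀ᵐ s ∂(volume.restrict (Icc 0 t)), ‖B s ^ j‖ ≤ |B T| ^ j := by
      refine (ae_restrict_iff' measurableSet_Icc).2 (Filter.Eventually.of_forall ?_)
      intro s hs
      have hmono : B s ≤ B T := by
        refine setIntegral_mono_set hb (Filter.Eventually.of_forall fun a => hb0 a)
          (HasSubset.Subset.eventuallyLE ?_)
        exact Icc_subset_Icc_right (hs.2.trans ht.2)
      have hnn : 0 ≤ B s := setIntegral_nonneg measurableSet_Icc (fun a _ => hb0 a)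
      rw [norm_pow, Real.norm_eq_abs, abs_of_nonneg hnn]
      exact pow_le_pow_left₀ hnn (hmono.trans (le_abs_self _)) j
    have := Integrable.bdd_mul (c := |B T| ^ j) h1 h2 h3
    exact this.congr (Filter.Eventually.of_forall fun s => mul_comm _ _)
  induction k with
  | zero =>
    intro t ht
    refine ⟨by simpa using hint 0 t ht, by simp⟩
  | succ k ih =>
    intro t ht
    refine ⟨hint (k+1) t ht, ?_⟩
    have hc : IntegrableOn (fun s => b s * B s ^ k) (Icc 0 t) := hint k t ht
    have hb' : IntegrableOn b (Icc 0 t) := hb.mono_set (Icc_subset_Icc_right ht.2)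
    have hparts := parts_aux hb' hc
    have hinner : (∫ s in Icc 0 t, b s * ∫ a in Icc 0 s, (fun r => b r * B r ^ k) a)
        = ∫ s in Icc 0 t, b s * (B s ^ (k+1) / ((k:ℝ)+1)) := by
      refine setIntegral_congr_fun measurableSet_Icc (fun s hs => ?_)
      have hs' : s ∈ Icc (0:ℝ) T := ⟨hs.1, hs.2.trans ht.2⟩
      rw [(ih s hs').2]
    rw [hinner] at hparts
    have e1 : (∫ s in Icc 0 t, b s * (B s ^ (k+1) / ((k:ℝ)+1)))
        = (∫ s in Icc 0 t, b s * B s ^ (k+1)) / ((k:ℝ)+1) := by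
      rw [← integral_div]
      refine setIntegral_congr_fun measurableSet_Icc (fun s _ => ?_)
      ring
    have e2 : (∫ s in Icc 0 t, (fun r => b r * B r ^ k) s * ∫ a in Icc 0 s, b a)
        = ∫ s in Icc 0 t, b s * B s ^ (k+1) := by
      refine setIntegral_congr_fun measurableSet_Icc (fun s _ => ?_)
      simp only [hB]
      ring
    rw [e1, e2] at hparts
    have ih_t : (∫ s in Icc 0 t, b s * B s ^ k) = B t ^ (k+1) / ((k:ℝ)+1) :=
      (ih t ht).2
    have hBt : (∫ s in Icc 0 t, b s) = B t := rfl
    rw [hBt, ih_t] at hparts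
    have hk1 : ((k:ℝ) + 1) ≠ 0 := by positivity
    have hk2 : ((k:ℝ) + 1 + 1) ≠ 0 := by positivity
    push_cast
    show (∫ s in Icc 0 t, b s * B s ^ (k+1)) = B t ^ (k+1+1) / ((k:ℝ)+1+1)
    field_simp at hparts ⊢
    linear_combination -hparts

lemma gronwall_aux {T A K : ℝ} {b v : ℝ → ℝ}
    (hb : IntegrableOn b (Icc 0 T)) (hb0 : ∀ s, 0 ≤ b s)
    (hbv : IntegrableOn (fun s => b s * v s) (Icc 0 T))
    (hK : ∀ s ∈ Icc (0:ℝ) T, v s ≤ K)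
    (hineq : ∀ t ∈ Icc (0:ℝ) T, v t ≤ A + ∫ s in Icc 0 t, b s * v s) :
    ∀ t ∈ Icc (0:ℝ) T, v t ≤ A * Real.exp (∫ s in Icc 0 t, b s) := by
  set B : ℝ → ℝ := fun s => ∫ a in Icc (0:ℝ) s, b a with hB
  have hIk := Ik_aux hb hb0
  have main : ∀ n : ℕ, ∀ t ∈ Icc (0:ℝ) T,
      v t ≤ A * (∑ k ∈ Finset.range n, B t ^ k / (k.factorial : ℝ))
            + K * (B t ^ n / (n.factorial : ℝ)) := by
    intro n
    induction n with
    | zero => intro t ht; simpa using hK t ht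
    | succ n ih =>
      intro t ht
      have hIint : ∀ k : ℕ, IntegrableOn (fun s => b s * B s ^ k) (Icc 0 t) :=
        fun k => (hIk k t ht).1
      have i2a : IntegrableOn
          (fun s => A * (b s * ∑ k ∈ Finset.range n, B s ^ k / (k.factorial : ℝ)))
          (Icc 0 t) := by
      -- rewrite as finite sum
        have hrw : (fun s => A * (b s * ∑ k ∈ Finset.range n, B s ^ k / (k.factorial : ℝ)))
            = fun s => ∑ k ∈ Finset.range n, A * ((b s * B s ^ k) / (k.factorial : ℝ)) := by
          funext s
          rw [Finset.mul_sum, Finset.mul_sum]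
          refine Finset.sum_congr rfl fun k _ => ?_
          ring
        rw [hrw]
        exact integrable_finset_sum _ fun k _ => (((hIint k).div_const _).const_mul _)
      have i2b : IntegrableOn
          (fun s => K * ((b s * B s ^ n) / (n.factorial : ℝ))) (Icc 0 t) :=
        ((hIint n).div_const _).const_mul _
      have hmono : (∫ s in Icc 0 t, b s * v s)
          ≤ ∫ s in Icc 0 t,
              (A * (b s * ∑ k ∈ Finset.range n, B s ^ k / (k.factorial : ℝ))
                + K * ((b s * B s ^ n) / (n.factorial : ℝ))) := by
        refine setIntegral_mono_on (hbv.mono_set (Icc_subset_Icc_right ht.2))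
          (i2a.add i2b) measurableSet_Icc (fun s hs => ?_)
        have hsT : s ∈ Icc (0:ℝ) T := ⟨hs.1, hs.2.trans ht.2⟩
        have h1 : b s * v s ≤ b s *
            (A * (∑ k ∈ Finset.range n, B s ^ k / (k.factorial : ℝ))
              + K * (B s ^ n / (n.factorial : ℝ))) :=
          mul_le_mul_of_nonneg_left (ih s hsT) (hb0 s)
        refine h1.trans (le_of_eq ?_)
        ring
      have hval : (∫ s in Icc 0 t,
            (A * (b s * ∑ k ∈ Finset.range n, B s ^ k / (k.factorial : ℝ))
              + K * ((b s * B s ^ n) / (n.factorial : ℝ))))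
          = A * (∑ k ∈ Finset.range n,
                (B t ^ (k+1) / ((k:ℝ)+1)) / (k.factorial : ℝ))
            + K * ((B t ^ (n+1) / ((n:ℝ)+1)) / (n.factorial : ℝ)) := by
        rw [integral_add i2a i2b]
        congr 1
        · have hrw : (fun s => A * (b s * ∑ k ∈ Finset.range n, B s ^ k / (k.factorial : ℝ)))
              = fun s => ∑ k ∈ Finset.range n, A * ((b s * B s ^ k) / (k.factorial : ℝ)) := by
            funext s
            rw [Finset.mul_sum, Finset.mul_sum]
            refine Finset.sum_congr rfl fun k _ => ?_
            ring
          rw [hrw, integral_finset_sum _ (fun k _ => (((hIint k).div_const _).const_mul _)),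
            Finset.mul_sum]
          refine Finset.sum_congr rfl fun k _ => ?_
          rw [integral_const_mul, integral_div, (hIk k t ht).2]
        · rw [integral_const_mul, integral_div, (hIk n t ht).2]
      have step : v t ≤ A + (A * (∑ k ∈ Finset.range n,
                (B t ^ (k+1) / ((k:ℝ)+1)) / (k.factorial : ℝ))
            + K * ((B t ^ (n+1) / ((n:ℝ)+1)) / (n.factorial : ℝ))) := by
        have h0 := hineq t ht
        rw [hval] at hmono
        linarith
      have hdiv : ∀ k : ℕ, (B t ^ (k+1) / ((k:ℝ)+1)) / (k.factorial : ℝ)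
          = B t ^ (k+1) / ((k+1).factorial : ℝ) := by
        intro k
        rw [div_div, Nat.factorial_succ]
        push_cast
        ring_nf
      have hre : A + (A * (∑ k ∈ Finset.range n,
              (B t ^ (k+1) / ((k:ℝ)+1)) / (k.factorial : ℝ))
            + K * ((B t ^ (n+1) / ((n:ℝ)+1)) / (n.factorial : ℝ)))
          = A * (∑ k ∈ Finset.range (n+1), B t ^ k / (k.factorial : ℝ))
            + K * (B t ^ (n+1) / ((n+1).factorial : ℝ)) := by
        rw [Finset.sum_range_succ']
        simp only [hdiv, pow_zero, Nat.factorial_zero, Nat.cast_one]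
        ring
      calc v t ≤ _ := step
        _ = _ := by rw [← hre]
  intro t ht
  have hsum : HasSum (fun k : ℕ => B t ^ k / (k.factorial : ℝ)) (Real.exp (B t)) := by
    rw [Real.exp_eq_exp_ℝ]
    exact NormedSpace.expSeries_div_hasSum_exp (B t)
  have t1 := hsum.tendsto_sum_nat
  have t2 : Filter.Tendsto (fun n : ℕ => B t ^ n / (n.factorial : ℝ))
      Filter.atTop (nhds 0) := FloorSemiring.tendsto_pow_div_factorial_atTop (B t)
  have hlim : Filter.Tendsto
      (fun n : ℕ => A * (∑ k ∈ Finset.range n, B t ^ k / (k.factorial : ℝ))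
        + K * (B t ^ n / (n.factorial : ℝ)))
      Filter.atTop (nhds (A * Real.exp (B t) + K * 0)) :=
    (t1.const_mul A).add (t2.const_mul K)
  have := ge_of_tendsto' hlim (fun n => main n t ht)
  simpa using this

lemma offswitch {T : ℝ} (hT : 0 ≤ T) {h2 dom : ℝ → ℝ}
    (hdom : IntegrableOn dom (Icc 0 T))
    (hbound : ∀ s ∈ Icc (0:ℝ) T, ‖h2 s‖ ≤ dom s)
    (hψc : ContinuousOn (fun t => ∫ s in Icc 0 t, h2 s) (Icc 0 T)) :
    ∃ τ : ℝ, IntegrableOn ((Iic τ).indicator h2) (Icc 0 T) ∧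
      ∀ t ∈ Icc (0:ℝ) T,
        (∫ s in Icc 0 t, h2 s) = ∫ s in Icc 0 t, (Iic τ).indicator h2 s := by
  classical
  set ψ : ℝ → ℝ := fun t => ∫ s in Icc 0 t, h2 s with hψ
  set S : Set ℝ := {t | t ∈ Icc (0:ℝ) T ∧ IntegrableOn h2 (Icc 0 t)} with hS
  have hsing : IntegrableOn h2 (Icc (0:ℝ) 0) := by
    rw [IntegrableOn, Set.Icc_self]
    have : volume.restrict ({(0:ℝ)}) = 0 := by
      simp [Measure.restrict_singleton]
    rw [this]
    exact integrable_zero_measure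
  have hS0 : (0:ℝ) ∈ S := ⟨⟨le_refl _, hT⟩, hsing⟩
  have hSbdd : BddAbove S := ⟨T, fun s hs => hs.1.2⟩
  set τ : ℝ := sSup S with hτ
  have hτ0 : 0 ≤ τ := le_csSup hSbdd hS0
  have hτT : τ ≤ T := csSup_le ⟨0, hS0⟩ fun s hs => hs.1.2
  have hdown : ∀ t ∈ Icc (0:ℝ) T, t < τ → IntegrableOn h2 (Icc 0 t) := by
    intro t ht htτ
    obtain ⟨s, hsS, hts⟩ := exists_lt_of_lt_csSup ⟨0, hS0⟩ htτ
    exact hsS.2.mono_set (Icc_subset_Icc_right hts.le)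
  have hτS : IntegrableOn h2 (Icc 0 τ) := by
    rcases eq_or_lt_of_le hτ0 with h0 | h0
    · rw [← h0]; exact hsing
    · -- measurability via union
      have hmeas : AEStronglyMeasurable h2 (volume.restrict (Ico 0 τ)) := by
        have hun : (Ico (0:ℝ) τ) = ⋃ n : ℕ, Icc 0 (τ - τ / (n + 1)) := by
          ext s
          simp only [Set.mem_Ico, Set.mem_iUnion, Set.mem_Icc]
          constructor
          · rintro ⟨hs0, hsτ⟩
            obtain ⟨n, hn⟩ := exists_nat_one_div_lt (div_pos (sub_pos.2 hsτ) h0)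
            refine ⟨n, hs0, ?_⟩
            have : τ * (1 / (n + 1)) < τ * ((τ - s) / τ) :=
              mul_lt_mul_of_pos_left hn h0
            rw [mul_one_div, mul_div_cancel₀ _ (ne_of_gt h0)] at this
            linarith
          · rintro ⟨n, hs0, hsn⟩
            refine ⟨hs0, lt_of_le_of_lt hsn ?_⟩
            have : 0 < τ / (n + 1) := by positivity
            linarith
        rw [hun, aestronglyMeasurable_iUnion_iff]
        intro n
        rcases le_or_gt (τ - τ / (n+1)) T with hle | hgt
        · rcases le_or_gt 0 (τ - τ / (n+1)) with h00 | h00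
          · exact (hdown _ ⟨h00, hle⟩ (by
              have : 0 < τ / (n + 1) := by positivity
              linarith)).aestronglyMeasurable
          · have : Icc (0:ℝ) (τ - τ/(n+1)) = ∅ := Icc_eq_empty (by linarith)
            rw [this]
            simp only [Measure.restrict_empty]
            exact aestronglyMeasurable_zero_measure h2
        · exact absurd (lt_of_lt_of_le (by positivity : (0:ℝ) < τ/(n+1)) le_rfl)
            (by nlinarith [hτT] : ¬ (0 < τ/(n+1)))
      have hmeas' : AEStronglyMeasurable h2 (volume.restrict (Icc 0 τ)) := by
        rwa [← Measure.restrict_congr_set Ico_ae_eq_Icc]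
      refine Integrable.mono' (hdom.mono_set (Icc_subset_Icc_right hτT)) hmeas' ?_
      refine (ae_restrict_iff' measurableSet_Icc).2 (Filter.Eventually.of_forall ?_)
      intro s hs
      exact hbound s ⟨hs.1, hs.2.trans hτT⟩
  have hτmem : τ ∈ Icc (0:ℝ) T := ⟨hτ0, hτT⟩
  have hψzero : ∀ t ∈ Icc (0:ℝ) T, τ < t → ψ t = 0 := by
    intro t ht hτt
    have : ¬ IntegrableOn h2 (Icc 0 t) := by
      intro hint
      exact absurd (le_csSup hSbdd (⟨ht, hint⟩ : t ∈ S)) (not_le.2 hτt)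
    exact integral_undef this
  have hψτ : τ < T → ψ τ = 0 := by
    intro hτT'
    have hne : Filter.NeBot (nhdsWithin τ (Ioc τ T)) := by
      rw [← mem_closure_iff_nhdsWithin_neBot, closure_Ioc (ne_of_lt hτT')]
      exact ⟨le_refl _, hτT'.le⟩
    have h1 : Filter.Tendsto ψ (nhdsWithin τ (Ioc τ T)) (nhds (ψ τ)) :=
      (hψc τ hτmem).mono (fun s hs => ⟨hτ0.trans hs.1.le, hs.2⟩)
    have h2' : Filter.Tendsto ψ (nhdsWithin τ (Ioc τ T)) (nhds 0) := by
      refine Filter.Tendsto.congr' ?_ tendsto_const_nhds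
      filter_upwards [self_mem_nhdsWithin] with s hs
      exact (hψzero s ⟨hτ0.trans hs.1.le, hs.2⟩ hs.1).symm
    exact tendsto_nhds_unique h1 h2'
  have hindint : IntegrableOn ((Iic τ).indicator h2) (Icc 0 T) := by
    rw [IntegrableOn, integrable_indicator_iff measurableSet_Iic, IntegrableOn,
      Measure.restrict_restrict measurableSet_Iic]
    have : Iic τ ∩ Icc (0:ℝ) T = Icc 0 τ := by
      ext s
      simp only [Set.mem_inter_iff, Set.mem_Iic, Set.mem_Icc]
      exact ⟨fun ⟨h1, h2, _⟩ => ⟨h2, h1⟩, fun ⟨h1, h2⟩ => ⟨h2, h1, h2.trans hτT⟩⟩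
    rwa [this]
  refine ⟨τ, hindint, fun t ht => ?_⟩
  rcases le_or_gt t τ with hle | hgt
  · symm
    refine setIntegral_congr_fun measurableSet_Icc (fun s hs => ?_)
    exact Set.indicator_of_mem (show s ∈ Iic τ from hs.2.trans hle) h2
  · have hset : Icc (0:ℝ) t ∩ Iic τ = Icc 0 τ := by
      ext s
      simp only [Set.mem_inter_iff, Set.mem_Iic, Set.mem_Icc]
      exact ⟨fun ⟨⟨a, _⟩, c⟩ => ⟨a, c⟩, fun ⟨a, c⟩ => ⟨⟨a, (c.trans hgt.le)⟩, c⟩⟩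
    have hRHS : (∫ s in Icc 0 t, (Iic τ).indicator h2 s) = ψ τ := by
      rw [setIntegral_indicator measurableSet_Iic, hset]
    rw [hRHS, hψτ (lt_of_lt_of_le hgt ht.2)]
    exact hψzero t ht hgt


lemma cs_bound {d m : ℕ} (M : Matrix (Fin d) (Fin m) ℝ)
    (y : Fin d → ℝ) (w : Fin m → ℝ) (ε : Fin d → ℝ)
    (hε : ∀ i, ε i = 0 ∨ ε i = 1) :
    2 * ∑ i, ε i * (M.mulVec w i) * y i
      ≤ (∑ i, ∑ j, (M i j)^2) + (∑ i, (y i)^2) * (∑ j, (w j)^2) := by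
  classical
  set z : Fin m → ℝ := fun j => ∑ i, ε i * y i * M i j with hz
  have step1 : ∑ i, ε i * (M.mulVec w i) * y i = ∑ j, z j * w j := by
    simp only [Matrix.mulVec, dotProduct, hz, Finset.sum_mul, Finset.mul_sum]
    rw [Finset.sum_comm]
    refine Finset.sum_congr rfl fun j _ => Finset.sum_congr rfl fun i _ => by ring
  have step2 : (∑ j, z j * w j)^2 ≤ (∑ j, (z j)^2) * (∑ j, (w j)^2) := by
    exact Finset.sum_mul_sq_le_sq_mul_sq Finset.univ z w
  have step3 : (∑ j, (z j)^2) ≤ (∑ i, (y i)^2) * (∑ i, ∑ j, (M i j)^2) := by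
    have h1 : ∀ j, (z j)^2 ≤ (∑ i, (y i)^2) * (∑ i, (M i j)^2) := by
      intro j
      have hcs : (∑ i, (ε i * y i) * M i j)^2
          ≤ (∑ i, (ε i * y i)^2) * (∑ i, (M i j)^2) := by
        exact Finset.sum_mul_sq_le_sq_mul_sq Finset.univ (fun i => ε i * y i)
          (fun i => M i j)
      have h2 : (∑ i, (ε i * y i)^2) ≤ ∑ i, (y i)^2 := by
        refine Finset.sum_le_sum fun i _ => ?_
        rcases hε i with h | h
        · rw [h]; simpa using sq_nonneg (y i)
        · rw [h, one_mul]
      calc (z j)^2 ≤ (∑ i, (ε i * y i)^2) * (∑ i, (M i j)^2) := hcs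
        _ ≤ (∑ i, (y i)^2) * (∑ i, (M i j)^2) := by
            have : (0:ℝ) ≤ ∑ i, (M i j)^2 := by positivity
            exact mul_le_mul_of_nonneg_right h2 this
    calc (∑ j, (z j)^2) ≤ ∑ j, (∑ i, (y i)^2) * (∑ i, (M i j)^2) :=
          Finset.sum_le_sum fun j _ => h1 j
      _ = (∑ i, (y i)^2) * (∑ j, ∑ i, (M i j)^2) := by rw [Finset.mul_sum]
      _ = (∑ i, (y i)^2) * (∑ i, ∑ j, (M i j)^2) := by rw [Finset.sum_comm]
  rw [step1]
  set P := ∑ j, z j * w j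
  set F2 := ∑ i, ∑ j, (M i j)^2
  set Y := ∑ i, (y i)^2
  set W := ∑ j, (w j)^2
  have hF2 : (0:ℝ) ≤ F2 := by positivity
  have hY : (0:ℝ) ≤ Y := by positivity
  have hW : (0:ℝ) ≤ W := by positivity
  have hP2 : P^2 ≤ F2 * (Y * W) := by
    calc P^2 ≤ (∑ j, (z j)^2) * W := step2
      _ ≤ (Y * F2) * W := mul_le_mul_of_nonneg_right step3 hW
      _ = F2 * (Y * W) := by ring
  nlinarith [hP2, sq_nonneg (F2 - Y * W), mul_nonneg hY hW, hF2, sq_nonneg (F2 + Y * W)]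

lemma euclid_norm_sq {n : ℕ} (y : EuclideanSpace ℝ (Fin n)) :
    ‖y‖^2 = ∑ i, (y i)^2 := by
  rw [EuclideanSpace.norm_eq, Real.sq_sqrt (by positivity)]
  simp [sq_abs]

lemma euclid_inner {n : ℕ} (y z : EuclideanSpace ℝ (Fin n)) :
    ⟪y, z⟫ = ∑ i, y i * z i := by
  simp [PiLp.inner_apply, RCLike.inner_apply, mul_comm]

/-- A priori bound under a one-sided linear growth condition (L² case): if `x` solves
`x(t) = x₀ + ∫_0^t f₀(x(s)) ds + ∫_0^t f(x(s)) u(s) ds` with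
`2⟨y, f₀(y)⟩ + ‖f(y)‖_F² ≤ C(1 + ‖y‖²)` and `‖u‖_{L²([0,T])} ≤ R`, then
`‖x(t)‖² ≤ (‖x₀‖² + CT) exp(CT + R²)` for all `t ∈ [0,T]`. -/
theorem stmt_6 {d m : ℕ} (T C R : ℝ) (hT : 0 < T) (hC : 0 < C) (hR : 0 < R)
    (f0 : EuclideanSpace ℝ (Fin d) → EuclideanSpace ℝ (Fin d))
    (f : EuclideanSpace ℝ (Fin d) → Matrix (Fin d) (Fin m) ℝ)
    (hf0c : Continuous f0) (hfc : ∀ i j, Continuous fun y => f y i j)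
    (u : ℝ → EuclideanSpace ℝ (Fin m))
    (x0 : EuclideanSpace ℝ (Fin d)) (x : ℝ → EuclideanSpace ℝ (Fin d))
    (hxc : Continuous x)
    (hgrow : ∀ y : EuclideanSpace ℝ (Fin d),
      2 * ⟪y, f0 y⟫ + ∑ i, ∑ j, (f y i j) ^ 2 ≤ C * (1 + ‖y‖ ^ 2))
    (hu2 : IntegrableOn (fun t => ‖u t‖ ^ 2) (Set.Icc 0 T))
    (huR : (∫ t in Set.Icc 0 T, ‖u t‖ ^ 2) ≤ R ^ 2)
    (hsol : ∀ t ∈ Set.Icc 0 T, ∀ i,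
      x t i = x0 i + (∫ s in Set.Icc 0 t, f0 (x s) i)
        + ∫ s in Set.Icc 0 t, (f (x s)).mulVec (u s) i) :
    ∀ t ∈ Set.Icc 0 T, ‖x t‖ ^ 2 ≤ (‖x0‖ ^ 2 + C * T) * Real.exp (C * T + R ^ 2) := by
  classical
  set v : ℝ → ℝ := fun t => ‖x t‖^2 with hv
  have hxicont : ∀ i : Fin d, Continuous fun s => x s i :=
    fun i => by fun_prop
  have hvcont : Continuous v := (hxc.norm).pow 2
  obtain ⟨Kv, hKv⟩ := isCompact_Icc.exists_bound_of_continuousOn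
    (hvcont.continuousOn (s := Icc (0:ℝ) T))
  -- u integrability
  have humeas : AEStronglyMeasurable (fun s => ‖u s‖) (volume.restrict (Icc 0 T)) := by
    have h2 := hu2.aestronglyMeasurable
    have h3 := Real.continuous_sqrt.comp_aestronglyMeasurable h2
    refine h3.congr (Filter.Eventually.of_forall fun s => ?_)
    simp [Real.sqrt_sq (norm_nonneg (u s))]
  have hu1 : IntegrableOn (fun s => ‖u s‖) (Icc 0 T) := by
    refine Integrable.mono' (g := fun s => 1 + ‖u s‖^2)
      ((integrable_const 1).add hu2) humeas
      (Filter.Eventually.of_forall fun s => ?_)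
    have h4 : ‖u s‖ ≤ 1 + ‖u s‖ ^ 2 := by
      nlinarith [norm_nonneg (u s), sq_nonneg (‖u s‖ - 1)]
    simpa using h4
  -- Frobenius bound
  have hFcont : Continuous fun s => ∑ i, ∑ j, (f (x s) i j)^2 := by
    refine continuous_finset_sum _ fun i _ => continuous_finset_sum _ fun j _ => ?_
    exact ((hfc i j).comp hxc).pow 2
  obtain ⟨MF, hMF⟩ := isCompact_Icc.exists_bound_of_continuousOn
    (hFcont.continuousOn (s := Icc (0:ℝ) T))
  have hMF0 : (0:ℝ) ≤ MF := le_trans (norm_nonneg _) (hMF 0 ⟨le_refl _, hT.le⟩)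
  have hrow : ∀ s ∈ Icc (0:ℝ) T, ∀ i, (∑ j, (f (x s) i j)^2) ≤ MF := by
    intro s hs i
    have h1 : (∑ j, (f (x s) i j)^2) ≤ ∑ i, ∑ j, (f (x s) i j)^2 :=
      Finset.single_le_sum (f := fun i => ∑ j, (f (x s) i j)^2)
        (fun i _ => by positivity) (Finset.mem_univ i)
    calc (∑ j, (f (x s) i j)^2) ≤ ∑ i, ∑ j, (f (x s) i j)^2 := h1
      _ ≤ |∑ i, ∑ j, (f (x s) i j)^2| := le_abs_self _
      _ ≤ MF := by rw [← Real.norm_eq_abs]; exact hMF s hs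
  -- per-component mulVec terms
  set h2 : Fin d → ℝ → ℝ := fun i s => (f (x s)).mulVec (u s) i with hh2
  have hh2bound : ∀ i, ∀ s ∈ Icc (0:ℝ) T, ‖h2 i s‖ ≤ Real.sqrt MF * ‖u s‖ := by
    intro i s hs
    have hexp : h2 i s = ∑ j, f (x s) i j * u s j := by
      simp [hh2, Matrix.mulVec, dotProduct]
    have hcs : (∑ j, f (x s) i j * u s j)^2
        ≤ (∑ j, (f (x s) i j)^2) * (∑ j, (u s j)^2) :=
      Finset.sum_mul_sq_le_sq_mul_sq Finset.univ _ _
    have hu : (∑ j, (u s j)^2) = ‖u s‖^2 := (euclid_norm_sq (u s)).symm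
    rw [hexp, Real.norm_eq_abs, ← Real.sqrt_sq_eq_abs]
    calc Real.sqrt ((∑ j, f (x s) i j * u s j)^2)
        ≤ Real.sqrt ((∑ j, (f (x s) i j)^2) * (∑ j, (u s j)^2)) :=
          Real.sqrt_le_sqrt hcs
      _ = Real.sqrt (∑ j, (f (x s) i j)^2) * Real.sqrt (∑ j, (u s j)^2) :=
          Real.sqrt_mul (by positivity) _
      _ ≤ Real.sqrt MF * ‖u s‖ := by
          rw [hu, Real.sqrt_sq (norm_nonneg _)]
          exact mul_le_mul_of_nonneg_right
            (Real.sqrt_le_sqrt (hrow s hs i)) (norm_nonneg _)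
  have hdomint : IntegrableOn (fun s => Real.sqrt MF * ‖u s‖) (Icc 0 T) :=
    hu1.const_mul _
  -- f0 part
  have hf0i : ∀ i : Fin d, Continuous fun s => f0 (x s) i :=
    fun i => by fun_prop
  have hf0int : ∀ i, IntegrableOn (fun s => f0 (x s) i) (Icc 0 T) :=
    fun i => (hf0i i).integrableOn_Icc
  have hψc : ∀ i, ContinuousOn (fun t => ∫ s in Icc 0 t, h2 i s) (Icc 0 T) := by
    intro i
    have heq : ∀ t' ∈ Icc (0:ℝ) T, x t' i - x0 i - (∫ s in Icc 0 t', f0 (x s) i)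
        = ∫ s in Icc 0 t', h2 i s := by
      intro t' ht'
      have := hsol t' ht' i
      simp only [hh2]
      linarith
    refine ContinuousOn.congr ?_ fun t' ht' => (heq t' ht').symm
    exact (((hxicont i).continuousOn).sub continuousOn_const).sub
      (intervalIntegral.continuousOn_primitive_Icc (hf0int i))
  have hcomp : ∀ i : Fin d, ∃ τ : ℝ,
      IntegrableOn ((Iic τ).indicator (h2 i)) (Icc 0 T) ∧
      ∀ t' ∈ Icc (0:ℝ) T,
        (∫ s in Icc 0 t', h2 i s) = ∫ s in Icc 0 t', (Iic τ).indicator (h2 i) s :=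
    fun i => offswitch hT.le hdomint (hh2bound i) (hψc i)
  choose τ hind hτeq using hcomp
  -- combined integrand q
  set q : Fin d → ℝ → ℝ :=
    fun i s => f0 (x s) i + (Iic (τ i)).indicator (h2 i) s with hq
  have hqint : ∀ i, IntegrableOn (q i) (Icc 0 T) :=
    fun i => (hf0int i).add (hind i)
  have hxq : ∀ i, ∀ t' ∈ Icc (0:ℝ) T, x t' i = x0 i + ∫ s in Icc 0 t', q i s := by
    intro i t' ht'
    rw [hsol t' ht' i, hτeq i t' ht', add_assoc]
    congr 1
    exact (integral_add ((hf0int i).mono_set (Icc_subset_Icc_right ht'.2))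
      ((hind i).mono_set (Icc_subset_Icc_right ht'.2))).symm
  -- integrability of q i * x · i
  have hxiQint : ∀ i, IntegrableOn (fun s => 2 * (q i s * x s i)) (Icc 0 T) := by
    intro i
    obtain ⟨Kx, hKx⟩ := isCompact_Icc.exists_bound_of_continuousOn
      ((hxicont i).continuousOn (s := Icc (0:ℝ) T))
    have h1 : IntegrableOn (fun s => x s i * q i s) (Icc 0 T) := by
      refine Integrable.bdd_mul (c := Kx) (hqint i)
        (((hxicont i).continuousOn).aestronglyMeasurable measurableSet_Icc) ?_
      exact (ae_restrict_iff' measurableSet_Icc).2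
        (Filter.Eventually.of_forall fun s hs => hKx s hs)
    exact (h1.const_mul 2).congr (Filter.Eventually.of_forall fun s => by ring)
  -- key identity for v
  have hvid : ∀ t' ∈ Icc (0:ℝ) T,
      v t' = ‖x0‖^2 + ∫ s in Icc 0 t', ∑ i, 2 * (q i s * x s i) := by
    intro t' ht'
    have hsub : Icc (0:ℝ) t' ⊆ Icc 0 T := Icc_subset_Icc_right ht'.2
    have hsq : ∀ i : Fin d,
        (x t' i)^2 = (x0 i)^2 + ∫ s in Icc 0 t', 2 * (q i s * x s i) := by
      intro i
      have hq' : IntegrableOn (q i) (Icc 0 t') := (hqint i).mono_set hsub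
      have hQ := sq_integral_aux hq'
      have hQc : ContinuousOn (fun s => ∫ a in Icc 0 s, q i a) (Icc 0 t') :=
        intervalIntegral.continuousOn_primitive_Icc hq'
      obtain ⟨KQ, hKQ⟩ := isCompact_Icc.exists_bound_of_continuousOn hQc
      have hint2 : IntegrableOn (fun s => 2 * (q i s * ∫ a in Icc 0 s, q i a))
          (Icc 0 t') := by
        have h1 : IntegrableOn (fun s => (∫ a in Icc 0 s, q i a) * q i s)
            (Icc 0 t') := by
          refine Integrable.bdd_mul (c := KQ) hq'
            (hQc.aestronglyMeasurable measurableSet_Icc) ?_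
          exact (ae_restrict_iff' measurableSet_Icc).2
            (Filter.Eventually.of_forall fun s hs => hKQ s hs)
        exact (h1.const_mul 2).congr (Filter.Eventually.of_forall fun s => by ring)
      have hint1 : IntegrableOn (fun s => 2 * x0 i * q i s) (Icc 0 t') :=
        hq'.const_mul _
      have e : (x t' i)^2 = (x0 i)^2 + (∫ s in Icc 0 t', 2 * x0 i * q i s)
          + (∫ s in Icc 0 t', 2 * (q i s * ∫ a in Icc 0 s, q i a)) := by
        rw [hxq i t' ht', ← hQ, integral_const_mul]
        ring
      have e2 : (∫ s in Icc 0 t', 2 * x0 i * q i s)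
          + (∫ s in Icc 0 t', 2 * (q i s * ∫ a in Icc 0 s, q i a))
          = ∫ s in Icc 0 t', 2 * (q i s * x s i) := by
        rw [← integral_add hint1 hint2]
        refine setIntegral_congr_fun measurableSet_Icc fun s hs => ?_
        rw [hxq i s (hsub hs)]
        ring
      linarith [e, e2]
    have hnx : v t' = ∑ i, (x t' i)^2 := euclid_norm_sq (x t')
    rw [hnx, Finset.sum_congr rfl fun i _ => hsq i, Finset.sum_add_distrib,
      ← euclid_norm_sq x0,
      ← integral_finset_sum _ fun i _ => ((hxiQint i).mono_set hsub)]
  -- pointwise bound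
  have hpt : ∀ s ∈ Icc (0:ℝ) T,
      (∑ i, 2 * (q i s * x s i)) ≤ C + (C + ‖u s‖^2) * v s := by
    intro s hs
    have hexpand : (∑ i, 2 * (q i s * x s i))
        = 2 * (∑ i, x s i * f0 (x s) i)
          + 2 * ∑ i, (if s ≤ τ i then (1:ℝ) else 0) * ((f (x s)).mulVec (u s) i)
              * x s i := by
      rw [Finset.mul_sum, Finset.mul_sum, ← Finset.sum_add_distrib]
      refine Finset.sum_congr rfl fun i _ => ?_
      simp only [hq]
      by_cases hsi : s ≤ τ i
      · rw [Set.indicator_of_mem (mem_Iic.2 hsi)]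
        simp only [hh2, if_pos hsi]
        ring
      · rw [Set.indicator_of_notMem (fun hmem => hsi (mem_Iic.1 hmem))]
        simp only [if_neg hsi]
        ring
    have hinner : (∑ i, x s i * f0 (x s) i) = ⟪x s, f0 (x s)⟫ :=
      (euclid_inner (x s) (f0 (x s))).symm
    have hgs := hgrow (x s)
    have hux : (∑ i, (x s i)^2) = v s := (euclid_norm_sq (x s)).symm
    have huw : (∑ j, (u s j)^2) = ‖u s‖^2 := (euclid_norm_sq (u s)).symm
    have hcs' : 2 * ∑ i, (if s ≤ τ i then (1:ℝ) else 0) * ((f (x s)).mulVec (u s) i)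
          * x s i
        ≤ (∑ i, ∑ j, (f (x s) i j)^2) + v s * ‖u s‖^2 := by
      have h0 := cs_bound (f (x s)) (x s) (u s)
        (fun i => if s ≤ τ i then 1 else 0)
        (fun i => by by_cases h : s ≤ τ i <;> simp [h])
      simpa only [hux, huw] using h0
    have hveq : ‖x s‖^2 = v s := rfl
    rw [hveq] at hgs
    rw [hexpand, hinner]
    have hrhs : C + (C + ‖u s‖^2) * v s
        = (C * (1 + v s) - (∑ i, ∑ j, (f (x s) i j)^2))
          + ((∑ i, ∑ j, (f (x s) i j)^2) + v s * ‖u s‖^2) := by ring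
    rw [hrhs]
    linarith [hgs, hcs']
  -- Gronwall setup
  set b : ℝ → ℝ := fun s => C + ‖u s‖^2 with hb
  have hbint : IntegrableOn b (Icc 0 T) := (integrable_const C).add hu2
  have hb0 : ∀ s, 0 ≤ b s := fun s => by positivity
  have hbv : IntegrableOn (fun s => b s * v s) (Icc 0 T) := by
    have h1 : IntegrableOn (fun s => v s * b s) (Icc 0 T) := by
      refine Integrable.bdd_mul (c := Kv) hbint
        ((hvcont.continuousOn).aestronglyMeasurable measurableSet_Icc) ?_
      exact (ae_restrict_iff' measurableSet_Icc).2
        (Filter.Eventually.of_forall fun s hs => hKv s hs)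
    exact h1.congr (Filter.Eventually.of_forall fun s => by ring)
  have hconst : ∀ t' : ℝ, t' ∈ Icc (0:ℝ) T →
      IntegrableOn (fun _ : ℝ => C) (Icc 0 t') := by
    intro t' _
    exact integrableOn_const measure_Icc_lt_top.ne
  have hmain : ∀ t' ∈ Icc (0:ℝ) T,
      v t' ≤ (‖x0‖^2 + C * T) + ∫ s in Icc 0 t', b s * v s := by
    intro t' ht'
    have hsub : Icc (0:ℝ) t' ⊆ Icc 0 T := Icc_subset_Icc_right ht'.2
    rw [hvid t' ht']
    have hstep1 : (∫ s in Icc 0 t', ∑ i, 2 * (q i s * x s i))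
        ≤ ∫ s in Icc 0 t', (C + b s * v s) := by
      refine setIntegral_mono_on
        (integrable_finset_sum _ fun i _ => (hxiQint i).mono_set hsub)
        ((hconst t' ht').add (hbv.mono_set hsub)) measurableSet_Icc
        (fun s hs => ?_)
      have := hpt s (hsub hs)
      simp only [hb]
      linarith
    have hstep2 : (∫ s in Icc 0 t', (C + b s * v s))
        = t' * C + ∫ s in Icc 0 t', b s * v s := by
      rw [integral_add (hconst t' ht') (hbv.mono_set hsub), setIntegral_const,
        Real.volume_real_Icc, sub_zero, max_eq_left ht'.1, smul_eq_mul]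
    have : t' * C ≤ C * T := by
      rw [mul_comm]
      exact mul_le_mul_of_nonneg_left ht'.2 hC.le
    linarith [hstep1, hstep2.le, hstep2.ge]
  have hgron := gronwall_aux hbint hb0 hbv
    (fun s hs => le_trans (le_abs_self _) (hKv s hs)) hmain
  intro t ht
  have h1 := hgron t ht
  have hBle : (∫ s in Icc 0 t, b s) ≤ ∫ s in Icc 0 T, b s := by
    refine setIntegral_mono_set hbint
      (Filter.Eventually.of_forall fun s => hb0 s)
      ((Icc_subset_Icc_right ht.2).eventuallyLE)
  have hBT : (∫ s in Icc 0 T, b s) ≤ C * T + R^2 := by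
    have : (∫ s in Icc 0 T, b s) = T * C + ∫ s in Icc 0 T, ‖u s‖^2 := by
      rw [hb, integral_add (integrableOn_const (C := C) measure_Icc_lt_top.ne) hu2,
        setIntegral_const, Real.volume_real_Icc, sub_zero,
        max_eq_left hT.le, smul_eq_mul]
    rw [this, mul_comm]
    linarith [huR]
  have hA : (0:ℝ) ≤ ‖x0‖^2 + C * T := by positivity
  calc ‖x t‖^2 = v t := rfl
    _ ≤ (‖x0‖^2 + C * T) * Real.exp (∫ s in Icc 0 t, b s) := h1
    _ ≤ (‖x0‖^2 + C * T) * Real.exp (C * T + R^2) := by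
        exact mul_le_mul_of_nonneg_left
          (Real.exp_le_exp.2 (hBle.trans hBT)) hA
end

section
/- Local Lipschitz dependence of the solution on the control (L^1 case): Suppose f_0 and f are globally Lipschitz: ||f_0(x) - f_0(z)|| + ||f(x) - f(z)|| ≤ L ||x - z|| for all x, z ∈ R^d. Let x(·; u) denote the solution of ẋ = f_0(x) + f(x)u, x(0) = x_0. Then for any R > 0 there is a constant K (depending on R, L, T, ||x_0||) such that for all u, v ∈ L^1([0,T]; R^m) with ||u||_{L^1} ≤ R and ||v||_{L^1} ≤ R: sup_{t ∈ [0,T]} ||x(t; u) - x(t; v)|| ≤ K ||u - v||_{L^1([0,T])}. -/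
open MeasureTheory

lemma gron_split (h : ℝ → ℝ) {t1 t2 : ℝ} (h1 : 0 ≤ t1) (h12 : t1 ≤ t2)
    (hint : IntegrableOn h (Set.Icc 0 t2)) :
    ∫ s in Set.Icc 0 t2, h s = (∫ s in Set.Icc 0 t1, h s) + ∫ s in Set.Ioc t1 t2, h s := by
  have hdisj : Disjoint (Set.Icc (0:ℝ) t1) (Set.Ioc t1 t2) :=
    Set.disjoint_left.2 fun x hx hx' => absurd hx.2 (not_le.2 hx'.1)
  rw [← Set.Icc_union_Ioc_eq_Icc h1 h12] at hint ⊢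
  rw [MeasureTheory.setIntegral_union hdisj measurableSet_Ioc
    (hint.mono_set Set.subset_union_left) (hint.mono_set Set.subset_union_right)]

lemma my_gronwall {T a : ℝ} (hT : 0 ≤ T) {φ g : ℝ → ℝ}
    (hφ : Continuous φ) (hφ0 : ∀ s, 0 ≤ φ s)
    (hg : IntegrableOn g (Set.Icc 0 T)) (hg0 : ∀ s, 0 ≤ g s)
    (h : ∀ t ∈ Set.Icc 0 T, φ t ≤ a + ∫ s in Set.Icc 0 t, g s * φ s) :
    ∀ t ∈ Set.Icc 0 T, φ t ≤ a * Real.exp (2 * ∫ s in Set.Icc 0 T, g s) := by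
  obtain ⟨C, hC⟩ := isCompact_Icc.exists_bound_of_continuousOn
    (hφ.continuousOn : ContinuousOn φ (Set.Icc 0 T))
  have hint : IntegrableOn (fun s => g s * φ s) (Set.Icc 0 T) := by
    have := hg.bdd_mul (f := φ) (c := C) hφ.aestronglyMeasurable.restrict
      (Filter.eventually_of_mem (self_mem_ae_restrict measurableSet_Icc) hC)
    exact this.congr (Filter.Eventually.of_forall fun s => mul_comm (φ s) (g s))
  set ψ : ℝ → ℝ := fun t => a + ∫ s in Set.Icc 0 t, g s * φ s with hψdef
  set G : ℝ → ℝ := fun t => ∫ s in Set.Ioc 0 t, g s with hGdef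
  have hsub : ∀ {t : ℝ}, t ∈ Set.Icc 0 T → Set.Icc (0:ℝ) t ⊆ Set.Icc 0 T :=
    fun ht => Set.Icc_subset_Icc le_rfl ht.2
  -- splitting identities
  have hψsplit : ∀ t1 t2, 0 ≤ t1 → t1 ≤ t2 → t2 ≤ T →
      ψ t2 = ψ t1 + ∫ s in Set.Ioc t1 t2, g s * φ s := by
    intro t1 t2 h1 h12 h2
    have := gron_split (fun s => g s * φ s) h1 h12
      (hint.mono_set (hsub ⟨h1.trans h12, h2⟩))
    simp only [hψdef, this]; ring
  have hGsplit : ∀ t1 t2, 0 ≤ t1 → t1 ≤ t2 → t2 ≤ T →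
      G t2 = G t1 + ∫ s in Set.Ioc t1 t2, g s := by
    intro t1 t2 h1 h12 h2
    have := gron_split g h1 h12 (hg.mono_set (hsub ⟨h1.trans h12, h2⟩))
    have e1 : ∫ s in Set.Icc 0 t2, g s = ∫ s in Set.Ioc 0 t2, g s :=
      integral_Icc_eq_integral_Ioc
    have e2 : ∫ s in Set.Icc 0 t1, g s = ∫ s in Set.Ioc 0 t1, g s :=
      integral_Icc_eq_integral_Ioc
    rw [e1, e2] at this
    exact this
  have hIocnn : ∀ t1 t2 : ℝ, 0 ≤ ∫ s in Set.Ioc t1 t2, g s * φ s :=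
    fun t1 t2 => setIntegral_nonneg measurableSet_Ioc fun s _ => mul_nonneg (hg0 s) (hφ0 s)
  have hIocnn' : ∀ t1 t2 : ℝ, 0 ≤ ∫ s in Set.Ioc t1 t2, g s :=
    fun t1 t2 => setIntegral_nonneg measurableSet_Ioc fun s _ => hg0 s
  have hψmono : ∀ t1 t2, 0 ≤ t1 → t1 ≤ t2 → t2 ≤ T → ψ t1 ≤ ψ t2 := by
    intro t1 t2 h1 h12 h2
    rw [hψsplit t1 t2 h1 h12 h2]
    linarith [hIocnn t1 t2]
  have hφψ : ∀ t ∈ Set.Icc 0 T, φ t ≤ ψ t := h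
  have hψ0 : ∀ t ∈ Set.Icc 0 T, 0 ≤ ψ t := fun t ht => (hφ0 t).trans (hφψ t ht)
  have hψzero : ψ 0 = a := by
    simp [hψdef, integral_Icc_eq_integral_Ioc]
  have hGzero : G 0 = 0 := by simp [hGdef]
  have ha : 0 ≤ a := hψzero ▸ hψ0 0 ⟨le_rfl, hT⟩
  -- the key step
  have step : ∀ t1 t2, 0 ≤ t1 → t1 ≤ t2 → t2 ≤ T →
      (∫ s in Set.Ioc t1 t2, g s) ≤ 1/2 →
      ψ t2 ≤ ψ t1 * Real.exp (2 * ∫ s in Set.Ioc t1 t2, g s) := by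
    intro t1 t2 h1 h12 h2 hΔ
    set Δ : ℝ := ∫ s in Set.Ioc t1 t2, g s with hΔdef
    have hΔ0 : 0 ≤ Δ := hIocnn' t1 t2
    have hbound : (∫ s in Set.Ioc t1 t2, g s * φ s) ≤ Δ * ψ t2 := by
      have hmono : ∫ s in Set.Ioc t1 t2, g s * φ s ≤ ∫ s in Set.Ioc t1 t2, g s * ψ t2 := by
        apply setIntegral_mono_on
        · exact hint.mono_set ((Set.Ioc_subset_Icc_self).trans
            (Set.Icc_subset_Icc h1 h2))
        · exact (hg.mono_set ((Set.Ioc_subset_Icc_self).trans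
            (Set.Icc_subset_Icc h1 h2))).mul_const _
        · exact measurableSet_Ioc
        · intro s hs
          have hsI : s ∈ Set.Icc 0 T := ⟨h1.trans hs.1.le, hs.2.trans h2⟩
          have : φ s ≤ ψ s := hφψ s hsI
          have : φ s ≤ ψ t2 := this.trans (hψmono s t2 hsI.1 hs.2 h2)
          exact mul_le_mul_of_nonneg_left this (hg0 s)
      calc (∫ s in Set.Ioc t1 t2, g s * φ s) ≤ ∫ s in Set.Ioc t1 t2, g s * ψ t2 := hmono
        _ = Δ * ψ t2 := by rw [integral_mul_const]
    have hkey : ψ t2 * (1 - Δ) ≤ ψ t1 := by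
      have := hψsplit t1 t2 h1 h12 h2
      nlinarith [hbound]
    have hexp : 1 ≤ (1 - Δ) * Real.exp (2 * Δ) := by
      nlinarith [Real.add_one_le_exp (2 * Δ)]
    have hψ2 : 0 ≤ ψ t2 := hψ0 t2 ⟨h1.trans h12, h2⟩
    nlinarith [mul_le_mul_of_nonneg_right hkey (Real.exp_pos (2 * Δ)).le,
      mul_le_mul_of_nonneg_left hexp hψ2]
  -- uniform continuity of G
  have hGcont : ContinuousOn G (Set.Icc 0 T) := intervalIntegral.continuousOn_primitive hg
  have hunif := isCompact_Icc.uniformContinuousOn_of_continuous hGcont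
  obtain ⟨δ, hδ0, hδ⟩ := Metric.uniformContinuousOn_iff.1 hunif (1/2) (by norm_num)
  -- induction
  have main : ∀ i : ℕ, ∀ t ∈ Set.Icc 0 T, t ≤ (i : ℝ) * (δ / 2) →
      ψ t ≤ a * Real.exp (2 * G t) := by
    intro i
    induction i with
    | zero =>
      intro t ht ht0
      have : t = 0 := le_antisymm (by simpa using ht0) ht.1
      subst this
      simp [hψzero, hGzero, ha]
    | succ i ih =>
      intro t ht hti
      by_cases hcase : t ≤ (i : ℝ) * (δ / 2)
      · exact ih t ht hcase
      push_neg at hcase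
      set t1 : ℝ := max (t - δ / 2) 0 with ht1def
      have ht10 : 0 ≤ t1 := le_max_right _ _
      have ht1t : t1 ≤ t := max_le (by linarith) ht.1
      have ht1i : t1 ≤ (i : ℝ) * (δ / 2) := by
        apply max_le
        · push_cast at hti ⊢; linarith
        · positivity
      have ht1T : t1 ∈ Set.Icc 0 T := ⟨ht10, ht1t.trans ht.2⟩
      have hdist : dist t1 t < δ := by
        have hge : t - δ/2 ≤ t1 := le_max_left _ _
        rw [Real.dist_eq, abs_sub_lt_iff]
        constructor <;> linarith
      have hΔle : (∫ s in Set.Ioc t1 t, g s) ≤ 1/2 := by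
        have h1 := hδ t1 ht1T t ht hdist
        have h2 := hGsplit t1 t ht10 ht1t ht.2
        rw [Real.dist_eq] at h1
        have := abs_le.1 h1.le
        linarith [this.1, this.2]
      have hstep := step t1 t ht10 ht1t ht.2 hΔle
      have hih := ih t1 ht1T ht1i
      have hGeq := hGsplit t1 t ht10 ht1t ht.2
      calc ψ t ≤ ψ t1 * Real.exp (2 * ∫ s in Set.Ioc t1 t, g s) := hstep
        _ ≤ (a * Real.exp (2 * G t1)) * Real.exp (2 * ∫ s in Set.Ioc t1 t, g s) :=
          mul_le_mul_of_nonneg_right hih (Real.exp_pos _).le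
        _ = a * Real.exp (2 * G t) := by
          rw [hGeq, mul_assoc, ← Real.exp_add]; ring_nf
  -- conclude
  intro t ht
  have hiT : T ≤ (⌈T / (δ/2)⌉₊ : ℝ) * (δ / 2) := by
    rw [← div_le_iff₀ (by positivity)]
    exact Nat.le_ceil _
  have h1 := main ⌈T / (δ/2)⌉₊ t ht (ht.2.trans hiT)
  have hGle : G t ≤ G T := by
    have := hGsplit t T ht.1 ht.2 le_rfl
    linarith [hIocnn' t T]
  have hGT : G T = ∫ s in Set.Icc 0 T, g s := integral_Icc_eq_integral_Ioc.symm
  calc φ t ≤ ψ t := hφψ t ht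
    _ ≤ a * Real.exp (2 * G t) := h1
    _ ≤ a * Real.exp (2 * ∫ s in Set.Icc 0 T, g s) := by
        rw [← hGT]
        exact mul_le_mul_of_nonneg_left
          (Real.exp_le_exp.2 (by linarith)) ha


/-- Local Lipschitz dependence of the solution on the control (L¹ case): if `f₀, f`
are globally Lipschitz, then for every `R > 0` there is a constant `K` such that for
controls `u, v` with `L¹`-norms at most `R`, the solutions of
`x(t) = x₀ + ∫_0^t f₀(x) ds + ∫_0^t f(x) u ds` satisfy
`sup_{t∈[0,T]} ‖x(t;u) - x(t;v)‖ ≤ K ‖u - v‖_{L¹([0,T])}`. -/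
theorem stmt_7 {d m : ℕ} (T L : ℝ) (hT : 0 < T) (hL : 0 < L)
    (f0 : EuclideanSpace ℝ (Fin d) → EuclideanSpace ℝ (Fin d))
    (f : EuclideanSpace ℝ (Fin d) → (EuclideanSpace ℝ (Fin m) →L[ℝ] EuclideanSpace ℝ (Fin d)))
    (x0 : EuclideanSpace ℝ (Fin d))
    (hLip : ∀ x z, ‖f0 x - f0 z‖ + ‖f x - f z‖ ≤ L * ‖x - z‖) :
    ∀ R > 0, ∃ K > 0, ∀ (u v : ℝ → EuclideanSpace ℝ (Fin m))
      (xu xv : ℝ → EuclideanSpace ℝ (Fin d)),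
      IntegrableOn u (Set.Icc 0 T) → IntegrableOn v (Set.Icc 0 T) →
      (∫ t in Set.Icc 0 T, ‖u t‖) ≤ R → (∫ t in Set.Icc 0 T, ‖v t‖) ≤ R →
      Continuous xu → Continuous xv →
      (∀ t ∈ Set.Icc 0 T,
        xu t = x0 + (∫ s in Set.Icc 0 t, f0 (xu s)) + ∫ s in Set.Icc 0 t, f (xu s) (u s)) →
      (∀ t ∈ Set.Icc 0 T,
        xv t = x0 + (∫ s in Set.Icc 0 t, f0 (xv s)) + ∫ s in Set.Icc 0 t, f (xv s) (v s)) →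
      ∀ t ∈ Set.Icc 0 T, ‖xu t - xv t‖ ≤ K * ∫ s in Set.Icc 0 T, ‖u s - v s‖ := by
  intro R hR
  have hLip0 : ∀ x z, ‖f0 x - f0 z‖ ≤ L * ‖x - z‖ := fun x z =>
    le_trans (le_add_of_nonneg_right (norm_nonneg _)) (hLip x z)
  have hLipf : ∀ x z, ‖f x - f z‖ ≤ L * ‖x - z‖ := fun x z =>
    le_trans (le_add_of_nonneg_left (norm_nonneg _)) (hLip x z)
  have hf0cont : Continuous f0 := by
    apply LipschitzWith.continuous (K := Real.toNNReal L)
    apply LipschitzWith.of_dist_le_mul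
    intro x z
    rw [dist_eq_norm, dist_eq_norm, Real.coe_toNNReal L hL.le]
    exact hLip0 x z
  have hfcont : Continuous f := by
    apply LipschitzWith.continuous (K := Real.toNNReal L)
    apply LipschitzWith.of_dist_le_mul
    intro x z
    rw [dist_eq_norm, dist_eq_norm, Real.coe_toNNReal L hL.le]
    exact hLipf x z
  set C0 : ℝ := ‖f0 0‖ with hC0def
  set Cf : ℝ := ‖f (0 : EuclideanSpace ℝ (Fin d))‖ with hCfdef
  have hC00 : 0 ≤ C0 := norm_nonneg _
  have hCf0 : 0 ≤ Cf := norm_nonneg _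
  have hf0bd : ∀ x, ‖f0 x‖ ≤ C0 + L * ‖x‖ := by
    intro x
    have h1 := norm_sub_norm_le (f0 x) (f0 0)
    have h2 := hLip0 x 0
    rw [sub_zero] at h2
    linarith
  have hfbd : ∀ x, ‖f x‖ ≤ Cf + L * ‖x‖ := by
    intro x
    have h1 := norm_sub_norm_le (f x) (f 0)
    have h2 := hLipf x 0
    rw [sub_zero] at h2
    linarith
  set A : ℝ := ‖x0‖ + C0 * T + Cf * R with hAdef
  set Γ : ℝ := L * (T + R) with hΓdef
  set M : ℝ := A * Real.exp (2 * Γ) with hMdef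
  set K : ℝ := (Cf + L * M + 1) * Real.exp (2 * Γ) with hKdef
  have hA0 : 0 ≤ A := by
    have := mul_nonneg hC00 hT.le
    have := mul_nonneg hCf0 hR.le
    have := norm_nonneg x0
    linarith
  have hM0 : 0 ≤ M := mul_nonneg hA0 (Real.exp_pos _).le
  have hK0 : 0 < K := by
    apply mul_pos _ (Real.exp_pos _)
    have := mul_nonneg hL.le hM0
    linarith
  refine ⟨K, hK0, ?_⟩
  intro u v xu xv hu hv huR hvR hxuc hxvc hequ heqv
  -- generic facts
  have hconst : ∀ (c t : ℝ), 0 ≤ t → ∫ _s in Set.Icc (0:ℝ) t, c = c * t := by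
    intro c t ht
    rw [setIntegral_const]
    simp [Real.volume_Icc, ENNReal.toReal_ofReal ht, mul_comm, ht]
  have hsub : ∀ {t : ℝ}, t ∈ Set.Icc 0 T → Set.Icc (0:ℝ) t ⊆ Set.Icc 0 T :=
    fun ht => Set.Icc_subset_Icc le_rfl ht.2
  have happly_int : ∀ (F : ℝ → (EuclideanSpace ℝ (Fin m) →L[ℝ] EuclideanSpace ℝ (Fin d)))
      (w : ℝ → EuclideanSpace ℝ (Fin m)), Continuous F → IntegrableOn w (Set.Icc 0 T) →
      IntegrableOn (fun s => F s (w s)) (Set.Icc 0 T) := by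
    intro F w hF hw
    obtain ⟨C, hC⟩ := isCompact_Icc.exists_bound_of_continuousOn
      (hF.continuousOn : ContinuousOn F (Set.Icc 0 T))
    have hmeas : AEStronglyMeasurable (fun s => F s (w s)) (volume.restrict (Set.Icc 0 T)) :=
      (isBoundedBilinearMap_apply.continuous).comp_aestronglyMeasurable
        ((hF.aestronglyMeasurable.restrict).prodMk hw.aestronglyMeasurable)
    refine Integrable.mono' (hw.norm.const_mul C) hmeas ?_
    refine Filter.eventually_of_mem (self_mem_ae_restrict measurableSet_Icc) (fun s hs => ?_)
    calc ‖F s (w s)‖ ≤ ‖F s‖ * ‖w s‖ := ContinuousLinearMap.le_opNorm _ _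
      _ ≤ C * ‖w s‖ := mul_le_mul_of_nonneg_right (hC s hs) (norm_nonneg _)
  have hbddmul : ∀ (F w : ℝ → ℝ), Continuous F → IntegrableOn w (Set.Icc 0 T) →
      IntegrableOn (fun s => F s * w s) (Set.Icc 0 T) := by
    intro F w hF hw
    obtain ⟨C, hC⟩ := isCompact_Icc.exists_bound_of_continuousOn
      (hF.continuousOn : ContinuousOn F (Set.Icc 0 T))
    exact hw.bdd_mul hF.aestronglyMeasurable.restrict
      (Filter.eventually_of_mem (self_mem_ae_restrict measurableSet_Icc) hC)
  have hgint : ∀ (w : ℝ → EuclideanSpace ℝ (Fin m)), IntegrableOn w (Set.Icc 0 T) →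
      IntegrableOn (fun s => L * (1 + ‖w s‖)) (Set.Icc 0 T) := by
    intro w hw
    exact (((integrableOn_const isCompact_Icc.measure_lt_top.ne).add hw.norm).const_mul L)
  have hgbound : ∀ (w : ℝ → EuclideanSpace ℝ (Fin m)), IntegrableOn w (Set.Icc 0 T) →
      (∫ t in Set.Icc 0 T, ‖w t‖) ≤ R →
      (∫ s in Set.Icc 0 T, L * (1 + ‖w s‖)) ≤ Γ := by
    intro w hw hwR
    rw [integral_const_mul, integral_add (integrableOn_const (C := (1:ℝ)) (s := Set.Icc 0 T)
      isCompact_Icc.measure_lt_top.ne) hw.norm, hconst 1 T hT.le, one_mul]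
    exact mul_le_mul_of_nonneg_left (by linarith) hL.le
  have hwmono : ∀ (w : ℝ → EuclideanSpace ℝ (Fin m)) {t : ℝ}, t ∈ Set.Icc 0 T →
      IntegrableOn w (Set.Icc 0 T) →
      (∫ s in Set.Icc 0 t, ‖w s‖) ≤ ∫ s in Set.Icc 0 T, ‖w s‖ := by
    intro w t ht hw
    exact setIntegral_mono_set hw.norm
      (Filter.Eventually.of_forall fun s => norm_nonneg _)
      (HasSubset.Subset.eventuallyLE (hsub ht))
  -- a priori bound for xv
  have hxvM : ∀ s ∈ Set.Icc 0 T, ‖xv s‖ ≤ M := by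
    have hf0xv : Continuous fun s => f0 (xv s) := hf0cont.comp hxvc
    have hGr := my_gronwall (a := A) hT.le (φ := fun s => ‖xv s‖)
      (g := fun s => L * (1 + ‖v s‖)) hxvc.norm (fun s => norm_nonneg _)
      (hgint v hv) (fun s => by positivity) ?_
    · intro s hs
      calc ‖xv s‖ ≤ A * Real.exp (2 * ∫ s in Set.Icc 0 T, L * (1 + ‖v s‖)) := hGr s hs
        _ ≤ M := by
          rw [hMdef]
          exact mul_le_mul_of_nonneg_left
            (Real.exp_le_exp.2 (by linarith [hgbound v hv hvR])) hA0
    · intro t ht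
      show ‖xv t‖ ≤ A + ∫ s in Set.Icc 0 t, (L * (1 + ‖v s‖)) * ‖xv s‖
      have hIf0 : IntegrableOn (fun s => f0 (xv s)) (Set.Icc 0 t) :=
        hf0xv.integrableOn_Icc
      have hIfv : IntegrableOn (fun s => f (xv s) (v s)) (Set.Icc 0 t) :=
        (happly_int _ v (hfcont.comp hxvc) hv).mono_set (hsub ht)
      have hN1 : ‖∫ s in Set.Icc 0 t, f0 (xv s)‖ ≤ C0 * T + ∫ s in Set.Icc 0 t, L * ‖xv s‖ := by
        calc ‖∫ s in Set.Icc 0 t, f0 (xv s)‖ ≤ ∫ s in Set.Icc 0 t, ‖f0 (xv s)‖ :=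
            norm_integral_le_integral_norm _
          _ ≤ ∫ s in Set.Icc 0 t, (C0 + L * ‖xv s‖) := by
            apply setIntegral_mono_on hf0xv.norm.integrableOn_Icc
              ((continuous_const.add ((show Continuous fun s => L * ‖xv s‖ from continuous_const.mul hxvc.norm))).integrableOn_Icc)
              measurableSet_Icc
            exact fun s _ => hf0bd (xv s)
          _ = C0 * t + ∫ s in Set.Icc 0 t, L * ‖xv s‖ := by
            rw [integral_add (integrableOn_const (C := C0) (s := Set.Icc 0 t) isCompact_Icc.measure_lt_top.ne)
              (((show Continuous fun s => L * ‖xv s‖ from continuous_const.mul hxvc.norm)).integrableOn_Icc), hconst C0 t ht.1]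
          _ ≤ C0 * T + ∫ s in Set.Icc 0 t, L * ‖xv s‖ := by
            have := mul_le_mul_of_nonneg_left ht.2 hC00
            linarith
      have hN2 : ‖∫ s in Set.Icc 0 t, f (xv s) (v s)‖ ≤
          Cf * R + ∫ s in Set.Icc 0 t, (L * ‖xv s‖) * ‖v s‖ := by
        calc ‖∫ s in Set.Icc 0 t, f (xv s) (v s)‖ ≤ ∫ s in Set.Icc 0 t, ‖f (xv s) (v s)‖ :=
            norm_integral_le_integral_norm _
          _ ≤ ∫ s in Set.Icc 0 t, (Cf * ‖v s‖ + (L * ‖xv s‖) * ‖v s‖) := by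
            apply setIntegral_mono_on (hIfv.norm)
              (IntegrableOn.mono_set ((hv.norm.const_mul Cf).add
                (hbddmul _ _ ((show Continuous fun s => L * ‖xv s‖ from continuous_const.mul hxvc.norm)) hv.norm)) (hsub ht))
              measurableSet_Icc
            intro s _
            calc ‖f (xv s) (v s)‖ ≤ ‖f (xv s)‖ * ‖v s‖ := ContinuousLinearMap.le_opNorm _ _
              _ ≤ (Cf + L * ‖xv s‖) * ‖v s‖ :=
                mul_le_mul_of_nonneg_right (hfbd (xv s)) (norm_nonneg _)
              _ = Cf * ‖v s‖ + (L * ‖xv s‖) * ‖v s‖ := by ring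
          _ = Cf * (∫ s in Set.Icc 0 t, ‖v s‖) + ∫ s in Set.Icc 0 t, (L * ‖xv s‖) * ‖v s‖ := by
            rw [integral_add (IntegrableOn.mono_set (hv.norm.const_mul Cf) (hsub ht))
              ((hbddmul _ _ ((show Continuous fun s => L * ‖xv s‖ from continuous_const.mul hxvc.norm)) hv.norm).mono_set (hsub ht)),
              integral_const_mul]
          _ ≤ Cf * R + ∫ s in Set.Icc 0 t, (L * ‖xv s‖) * ‖v s‖ := by
            have h1 := (hwmono v ht hv).trans hvR
            have := mul_le_mul_of_nonneg_left h1 hCf0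
            linarith
      have hcomb : (∫ s in Set.Icc 0 t, L * ‖xv s‖) +
          (∫ s in Set.Icc 0 t, (L * ‖xv s‖) * ‖v s‖) =
          ∫ s in Set.Icc 0 t, (L * (1 + ‖v s‖)) * ‖xv s‖ := by
        rw [← integral_add (((show Continuous fun s => L * ‖xv s‖ from continuous_const.mul hxvc.norm)).integrableOn_Icc)
          ((hbddmul _ _ ((show Continuous fun s => L * ‖xv s‖ from continuous_const.mul hxvc.norm)) hv.norm).mono_set (hsub ht))]
        apply integral_congr_ae
        apply Filter.Eventually.of_forall
        intro s
        ring
      have heq := heqv t ht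
      calc ‖xv t‖ = ‖x0 + (∫ s in Set.Icc 0 t, f0 (xv s)) + ∫ s in Set.Icc 0 t, f (xv s) (v s)‖ := by rw [heq]
        _ ≤ ‖x0‖ + ‖∫ s in Set.Icc 0 t, f0 (xv s)‖ + ‖∫ s in Set.Icc 0 t, f (xv s) (v s)‖ :=
          norm_add₃_le
        _ ≤ A + ∫ s in Set.Icc 0 t, (L * (1 + ‖v s‖)) * ‖xv s‖ := by
          rw [← hcomb, hAdef]
          linarith [hN1, hN2]
  -- the difference estimate
  set φ : ℝ → ℝ := fun s => ‖xu s - xv s‖ with hφdef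
  have hφc : Continuous φ := (hxuc.sub hxvc).norm
  set ε : ℝ := ∫ s in Set.Icc 0 T, ‖u s - v s‖ with hεdef
  have hε0 : 0 ≤ ε := setIntegral_nonneg measurableSet_Icc fun s _ => norm_nonneg _
  have huv : IntegrableOn (fun s => u s - v s) (Set.Icc 0 T) := hu.sub hv
  have hGr := my_gronwall (a := (Cf + L * M) * ε) hT.le (φ := φ)
    (g := fun s => L * (1 + ‖u s‖)) hφc (fun s => norm_nonneg _)
    (hgint u hu) (fun s => by positivity) ?_
  · intro t ht
    calc φ t ≤ (Cf + L * M) * ε * Real.exp (2 * ∫ s in Set.Icc 0 T, L * (1 + ‖u s‖)) := hGr t ht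
      _ ≤ (Cf + L * M) * ε * Real.exp (2 * Γ) := by
        apply mul_le_mul_of_nonneg_left (Real.exp_le_exp.2 (by linarith [hgbound u hu huR]))
        exact mul_nonneg (by positivity) hε0
      _ ≤ K * ε := by
        rw [hKdef]
        have h1 : (0:ℝ) ≤ Real.exp (2*Γ) := (Real.exp_pos _).le
        nlinarith [mul_nonneg hε0 h1]
  · intro t ht
    show φ t ≤ (Cf + L * M) * ε + ∫ s in Set.Icc 0 t, (L * (1 + ‖u s‖)) * φ s
    -- integrability on Icc 0 t
    have hd0c : Continuous fun s => f0 (xu s) - f0 (xv s) :=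
      (hf0cont.comp hxuc).sub (hf0cont.comp hxvc)
    have hd1I : IntegrableOn (fun s => (f (xu s) - f (xv s)) (u s)) (Set.Icc 0 T) :=
      happly_int _ u ((hfcont.comp hxuc).sub (hfcont.comp hxvc)) hu
    have hd2I : IntegrableOn (fun s => f (xv s) (u s - v s)) (Set.Icc 0 T) :=
      happly_int _ _ (hfcont.comp hxvc) huv
    have hfxuuI : IntegrableOn (fun s => f (xu s) (u s)) (Set.Icc 0 T) :=
      happly_int _ u (hfcont.comp hxuc) hu
    have hfxvuI : IntegrableOn (fun s => f (xv s) (u s)) (Set.Icc 0 T) :=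
      happly_int _ u (hfcont.comp hxvc) hu
    have hfxvvI : IntegrableOn (fun s => f (xv s) (v s)) (Set.Icc 0 T) :=
      happly_int _ v (hfcont.comp hxvc) hv
    -- decomposition of the difference
    have heqd : xu t - xv t = (∫ s in Set.Icc 0 t, (f0 (xu s) - f0 (xv s)))
        + (∫ s in Set.Icc 0 t, (f (xu s) - f (xv s)) (u s))
        + ∫ s in Set.Icc 0 t, f (xv s) (u s - v s) := by
      have e0 : ∫ s in Set.Icc 0 t, (f0 (xu s) - f0 (xv s)) =
          (∫ s in Set.Icc 0 t, f0 (xu s)) - ∫ s in Set.Icc 0 t, f0 (xv s) :=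
        integral_sub ((hf0cont.comp hxuc).integrableOn_Icc) ((hf0cont.comp hxvc).integrableOn_Icc)
      have e1 : ∫ s in Set.Icc 0 t, (f (xu s) - f (xv s)) (u s) =
          (∫ s in Set.Icc 0 t, f (xu s) (u s)) - ∫ s in Set.Icc 0 t, f (xv s) (u s) := by
        rw [← integral_sub (hfxuuI.mono_set (hsub ht)) (hfxvuI.mono_set (hsub ht))]
        apply integral_congr_ae
        apply Filter.Eventually.of_forall
        intro s
        simp [ContinuousLinearMap.sub_apply]
      have e2 : ∫ s in Set.Icc 0 t, f (xv s) (u s - v s) =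
          (∫ s in Set.Icc 0 t, f (xv s) (u s)) - ∫ s in Set.Icc 0 t, f (xv s) (v s) := by
        rw [← integral_sub (hfxvuI.mono_set (hsub ht)) (hfxvvI.mono_set (hsub ht))]
        apply integral_congr_ae
        apply Filter.Eventually.of_forall
        intro s
        simp
      rw [e0, e1, e2, hequ t ht, heqv t ht]
      abel
    have hN0 : ‖∫ s in Set.Icc 0 t, (f0 (xu s) - f0 (xv s))‖ ≤
        ∫ s in Set.Icc 0 t, L * φ s := by
      calc ‖∫ s in Set.Icc 0 t, (f0 (xu s) - f0 (xv s))‖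
          ≤ ∫ s in Set.Icc 0 t, ‖f0 (xu s) - f0 (xv s)‖ := norm_integral_le_integral_norm _
        _ ≤ ∫ s in Set.Icc 0 t, L * φ s := by
          apply setIntegral_mono_on hd0c.norm.integrableOn_Icc
            (((show Continuous fun s => L * φ s from continuous_const.mul hφc)).integrableOn_Icc) measurableSet_Icc
          exact fun s _ => hLip0 (xu s) (xv s)
    have hN1 : ‖∫ s in Set.Icc 0 t, (f (xu s) - f (xv s)) (u s)‖ ≤
        ∫ s in Set.Icc 0 t, (L * φ s) * ‖u s‖ := by
      calc ‖∫ s in Set.Icc 0 t, (f (xu s) - f (xv s)) (u s)‖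
          ≤ ∫ s in Set.Icc 0 t, ‖(f (xu s) - f (xv s)) (u s)‖ := norm_integral_le_integral_norm _
        _ ≤ ∫ s in Set.Icc 0 t, (L * φ s) * ‖u s‖ := by
          apply setIntegral_mono_on (IntegrableOn.mono_set hd1I.norm (hsub ht))
            ((hbddmul _ _ ((show Continuous fun s => L * φ s from continuous_const.mul hφc)) hu.norm).mono_set (hsub ht)) measurableSet_Icc
          intro s _
          calc ‖(f (xu s) - f (xv s)) (u s)‖ ≤ ‖f (xu s) - f (xv s)‖ * ‖u s‖ :=
              ContinuousLinearMap.le_opNorm _ _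
            _ ≤ (L * φ s) * ‖u s‖ :=
              mul_le_mul_of_nonneg_right (hLipf (xu s) (xv s)) (norm_nonneg _)
    have hN2 : ‖∫ s in Set.Icc 0 t, f (xv s) (u s - v s)‖ ≤ (Cf + L * M) * ε := by
      calc ‖∫ s in Set.Icc 0 t, f (xv s) (u s - v s)‖
          ≤ ∫ s in Set.Icc 0 t, ‖f (xv s) (u s - v s)‖ := norm_integral_le_integral_norm _
        _ ≤ ∫ s in Set.Icc 0 t, (Cf + L * M) * ‖u s - v s‖ := by
          apply setIntegral_mono_on (IntegrableOn.mono_set hd2I.norm (hsub ht))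
            (IntegrableOn.mono_set (huv.norm.const_mul _) (hsub ht)) measurableSet_Icc
          intro s hs
          calc ‖f (xv s) (u s - v s)‖ ≤ ‖f (xv s)‖ * ‖u s - v s‖ :=
              ContinuousLinearMap.le_opNorm _ _
            _ ≤ (Cf + L * M) * ‖u s - v s‖ := by
              apply mul_le_mul_of_nonneg_right _ (norm_nonneg _)
              have h1 := hfbd (xv s)
              have h2 := hxvM s (hsub ht hs)
              have := mul_le_mul_of_nonneg_left h2 hL.le
              linarith
        _ = (Cf + L * M) * ∫ s in Set.Icc 0 t, ‖u s - v s‖ := integral_const_mul _ _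
        _ ≤ (Cf + L * M) * ε := by
          apply mul_le_mul_of_nonneg_left (hwmono (fun s => u s - v s) ht huv) (by positivity)
    have hcomb : (∫ s in Set.Icc 0 t, L * φ s) + (∫ s in Set.Icc 0 t, (L * φ s) * ‖u s‖) =
        ∫ s in Set.Icc 0 t, (L * (1 + ‖u s‖)) * φ s := by
      rw [← integral_add (((show Continuous fun s => L * φ s from continuous_const.mul hφc)).integrableOn_Icc)
        ((hbddmul _ _ ((show Continuous fun s => L * φ s from continuous_const.mul hφc)) hu.norm).mono_set (hsub ht))]
      apply integral_congr_ae
      apply Filter.Eventually.of_forall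
      intro s
      ring
    calc φ t = ‖(∫ s in Set.Icc 0 t, (f0 (xu s) - f0 (xv s)))
        + (∫ s in Set.Icc 0 t, (f (xu s) - f (xv s)) (u s))
        + ∫ s in Set.Icc 0 t, f (xv s) (u s - v s)‖ := by show ‖xu t - xv t‖ = _; rw [heqd]
      _ ≤ ‖∫ s in Set.Icc 0 t, (f0 (xu s) - f0 (xv s))‖
        + ‖∫ s in Set.Icc 0 t, (f (xu s) - f (xv s)) (u s)‖
        + ‖∫ s in Set.Icc 0 t, f (xv s) (u s - v s)‖ := norm_add₃_le
      _ ≤ (Cf + L * M) * ε + ∫ s in Set.Icc 0 t, (L * (1 + ‖u s‖)) * φ s := by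
        rw [← hcomb]
        linarith [hN0, hN1, hN2]
end

section
/- If two bounded variation paths X, Y : [0,T] → R^m with X(0) = Y(0) have time-extended signatures satisfying S_{0,T}((t, X(t))) = S_{0,T}((t, Y(t))), then X(t) = Y(t) for all t ∈ [0,T]; conversely equality of the paths implies equality of the signatures. -/
open MeasureTheory

/-- Left-point Riemann–Stieltjes integral `∫_a^b f dg`, defined as the limit (along
uniform partitions) of Riemann–Stieltjes sums. For `f` continuous and `g` of bounded
variation this coincides with the classical Riemann–Stieltjes integral. -/
noncomputable def rsInt (f g : ℝ → ℝ) (a b : ℝ) : ℝ :=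
  Filter.limUnder Filter.atTop (fun n : ℕ =>
    ∑ k ∈ Finset.range n,
      f (a + k * (b - a) / n) * (g (a + (k + 1) * (b - a) / n) - g (a + k * (b - a) / n)))

/-- Iterated Stieltjes integral of the path `Z` over `[0,t]` associated with the word
`w` (head = outermost integration variable):
`iterInt Z (i :: w) t = ∫_0^t iterInt Z w s  dZ_i(s)`, `iterInt Z [] t = 1`. -/
noncomputable def iterInt {m : ℕ} (Z : ℝ → Fin m → ℝ) : List (Fin m) → ℝ → ℝ
  | [], _ => 1
  | i :: w, t => rsInt (fun s => iterInt Z w s) (fun s => Z s i) 0 t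

namespace Sig9

lemma mesh_mem {t : ℝ} (ht : 0 ≤ t) {n : ℕ} {c : ℝ} (hc : 0 ≤ c) (hcn : c ≤ n) :
    (0:ℝ) + c * (t - 0) / ↑n ∈ Set.Icc (0:ℝ) t := by
  simp only [zero_add, sub_zero, Set.mem_Icc]
  constructor
  · positivity
  · rcases Nat.eq_zero_or_pos n with h | h
    · subst h; simpa using ht
    · rw [div_le_iff₀ (by exact_mod_cast h)]
      nlinarith

lemma rsInt_congr {f f' g g' : ℝ → ℝ} {b : ℝ} (hb : 0 ≤ b)
    (hf : ∀ s ∈ Set.Icc (0:ℝ) b, f s = f' s) (hg : ∀ s ∈ Set.Icc (0:ℝ) b, g s = g' s) :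
    rsInt f g 0 b = rsInt f' g' 0 b := by
  unfold rsInt
  congr 1
  funext n
  refine Finset.sum_congr rfl fun k hk => ?_
  have hk' := Finset.mem_range.mp hk
  have h1 := mesh_mem (t := b) hb (c := (k:ℝ)) (Nat.cast_nonneg k)
    (Nat.cast_le.mpr hk'.le)
  have h2 : ((k:ℝ) + 1) ≤ (n:ℝ) := by exact_mod_cast hk'
  have h2' := mesh_mem (t := b) hb (c := (k:ℝ) + 1) (by positivity) h2
  rw [hf _ h1, hg _ h1, hg _ h2']

lemma iterInt_congr {m : ℕ} {Z Z' : ℝ → Fin m → ℝ} (w : List (Fin m)) :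
    ∀ {t : ℝ}, 0 ≤ t → (∀ s ∈ Set.Icc (0:ℝ) t, Z s = Z' s) →
      iterInt Z w t = iterInt Z' w t := by
  induction w with
  | nil => intro t _ _; rfl
  | cons i w ih =>
    intro t ht h
    simp only [iterInt]
    exact rsInt_congr ht
      (fun s hs => ih hs.1 (fun u hu => h u ⟨hu.1, hu.2.trans hs.2⟩))
      (fun s hs => by rw [h s hs])

lemma rsInt_one (g : ℝ → ℝ) (t : ℝ) : rsInt (fun _ => (1:ℝ)) g 0 t = g t - g 0 := by
  unfold rsInt
  apply Filter.Tendsto.limUnder_eq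
  have h : (fun n : ℕ => ∑ k ∈ Finset.range n,
      (1:ℝ) * (g (0 + ((k:ℝ) + 1) * (t - 0) / n) - g (0 + (k:ℝ) * (t - 0) / n)))
      =ᶠ[Filter.atTop] fun _ => g t - g 0 := by
    filter_upwards [Filter.eventually_ge_atTop 1] with n hn
    have hcast : ∀ k : ℕ, ((k:ℝ) : ℝ) * (t - 0) / n = ((k:ℝ) * (t - 0) / n) := fun _ => rfl
    have := Finset.sum_range_sub (f := fun k : ℕ => g (0 + (k:ℝ) * (t - 0) / n)) n
    simp only [one_mul]
    have hterm : ∀ k : ℕ, g (0 + ((k:ℝ) + 1) * (t - 0) / n) =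
        g (0 + ((k+1 : ℕ):ℝ) * (t - 0) / n) := by intro k; push_cast; ring_nf
    calc (∑ k ∈ Finset.range n,
        (g (0 + ((k:ℝ) + 1) * (t - 0) / n) - g (0 + (k:ℝ) * (t - 0) / n)))
        = ∑ k ∈ Finset.range n,
          (g (0 + ((k+1:ℕ):ℝ) * (t - 0) / n) - g (0 + (k:ℝ) * (t - 0) / n)) := by
          refine Finset.sum_congr rfl fun k _ => by rw [hterm k]
      _ = g (0 + (n:ℝ) * (t - 0) / n) - g (0 + ((0:ℕ):ℝ) * (t - 0) / n) := by
          exact Finset.sum_range_sub (fun k : ℕ => g (0 + (k:ℝ) * (t - 0) / n)) n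
      _ = g t - g 0 := by
          have hn' : (n:ℝ) ≠ 0 := by positivity
          rw [show (0:ℝ) + (n:ℝ) * (t - 0) / n = t by field_simp; ring]
          norm_num
  exact (Filter.tendsto_congr' h).mpr tendsto_const_nhds

lemma tendsto_riemann {f : ℝ → ℝ} (hf : Continuous f) {b : ℝ} (hb : 0 ≤ b) :
    Filter.Tendsto (fun n : ℕ => ∑ k ∈ Finset.range n, f ((k:ℝ) * b / n) * (b / n))
      Filter.atTop (nhds (∫ s in (0:ℝ)..b, f s)) := by
  rw [Metric.tendsto_atTop]
  intro ε hε
  have hb1 : (0:ℝ) < b + 1 := by linarith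
  set ε' := ε / (b + 1) with hε'def
  have hε' : 0 < ε' := div_pos hε hb1
  obtain ⟨δ, hδ, hmod⟩ := Metric.uniformContinuousOn_iff.mp
    (isCompact_Icc.uniformContinuousOn_of_continuous (s := Set.Icc (0:ℝ) b)
      hf.continuousOn) ε' hε'
  obtain ⟨N, hN⟩ := exists_nat_gt (b / δ)
  refine ⟨N + 1, fun n hn => ?_⟩
  have hn1 : 1 ≤ n := le_trans (Nat.le_add_left 1 N) hn
  have hnpos : (0:ℝ) < n := by exact_mod_cast hn1
  have hbn : b / n < δ := by
    have hNn : (N:ℝ) < (n:ℝ) := by exact_mod_cast Nat.lt_of_lt_of_le (Nat.lt_succ_self N) hn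
    have h1 : b / δ < (n:ℝ) := lt_trans hN hNn
    rw [div_lt_iff₀ hnpos]
    have := (div_lt_iff₀ hδ).mp h1
    linarith [this]
  set a : ℕ → ℝ := fun k => (k:ℝ) * b / n with ha
  have hstep : ∀ k : ℕ, a (k + 1) - a k = b / n := by
    intro k; simp only [ha]; push_cast; field_simp; ring
  have hbn0 : 0 ≤ b / n := by positivity
  have hmem : ∀ k : ℕ, k ≤ n → a k ∈ Set.Icc (0:ℝ) b := by
    intro k hk
    constructor
    · simp only [ha]; positivity
    · simp only [ha]; rw [div_le_iff₀ hnpos]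
      have : (k:ℝ) ≤ n := by exact_mod_cast hk
      nlinarith
  have hsplit : (∫ s in (0:ℝ)..b, f s) = ∑ k ∈ Finset.range n, ∫ s in a k..a (k+1), f s := by
    rw [intervalIntegral.sum_integral_adjacent_intervals
      (fun k _ => hf.intervalIntegrable _ _)]
    have h0 : a 0 = 0 := by simp [ha]
    have hnn : a n = b := by simp only [ha]; field_simp
    rw [h0, hnn]
  have hconst : ∀ k : ℕ, f (a k) * (b / n) = ∫ _ in a k..a (k+1), f (a k) := by
    intro k
    rw [intervalIntegral.integral_const, hstep k, smul_eq_mul, mul_comm]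
  rw [dist_eq_norm, hsplit, ← Finset.sum_sub_distrib]
  have hterm : ∀ k ∈ Finset.range n,
      ‖(f (a k) * (b / n) - ∫ s in a k..a (k+1), f s)‖ ≤ ε' * (b / n) := by
    intro k hk
    have hk' := Finset.mem_range.mp hk
    rw [hconst k, ← intervalIntegral.integral_sub (intervalIntegrable_const)
      (hf.intervalIntegrable _ _)]
    have hle : a k ≤ a (k+1) := by
      have := hstep k; linarith [hbn0]
    have hbound : ∀ s ∈ Set.uIoc (a k) (a (k+1)), ‖f (a k) - f s‖ ≤ ε' := by
      intro s hs
      rw [Set.uIoc_of_le hle] at hs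
      have hak := hmem k hk'.le
      have hak1 := hmem (k+1) hk'
      have hsmem : s ∈ Set.Icc (0:ℝ) b := ⟨le_trans hak.1 hs.1.le, le_trans hs.2 hak1.2⟩
      have hdist : dist (a k) s < δ := by
        rw [Real.dist_eq, abs_sub_comm, abs_of_nonneg (by linarith [hs.1.le] : (0:ℝ) ≤ s - a k)]
        have : s - a k ≤ b / n := by
          have := hstep k; linarith [hs.2]
        linarith
      exact le_of_lt (by simpa [Real.dist_eq] using hmod (a k) hak s hsmem hdist)
    calc ‖∫ s in a k..a (k+1), (f (a k) - f s)‖ ≤ ε' * |a (k+1) - a k| :=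
          intervalIntegral.norm_integral_le_of_norm_le_const hbound
      _ = ε' * (b / n) := by rw [hstep k]; rw [abs_of_nonneg hbn0]
  calc ‖∑ k ∈ Finset.range n, (f (a k) * (b / n) - ∫ s in a k..a (k+1), f s)‖
      ≤ ∑ k ∈ Finset.range n, ‖(f (a k) * (b / n) - ∫ s in a k..a (k+1), f s)‖ :=
        norm_sum_le _ _
    _ ≤ ∑ _k ∈ Finset.range n, ε' * (b / n) := Finset.sum_le_sum hterm
    _ = n * (ε' * (b / n)) := by rw [Finset.sum_const, Finset.card_range, nsmul_eq_mul]
    _ = ε' * b := by field_simp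
    _ < ε := by
        rw [hε'def, div_mul_eq_mul_div, div_lt_iff₀ hb1]
        nlinarith

lemma rsInt_id_eq_integral {f : ℝ → ℝ} (hf : Continuous f) {b : ℝ} (hb : 0 ≤ b) :
    rsInt f (fun s => s) 0 b = ∫ s in (0:ℝ)..b, f s := by
  unfold rsInt
  apply Filter.Tendsto.limUnder_eq
  apply (Filter.tendsto_congr' ?_).mpr (tendsto_riemann hf hb)
  filter_upwards [Filter.eventually_ge_atTop 1] with n hn
  have hnpos : (0:ℝ) < n := by exact_mod_cast hn
  refine Finset.sum_congr rfl fun k _ => ?_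
  have h1 : (0:ℝ) + (k:ℝ) * (b - 0) / n = (k:ℝ) * b / n := by ring
  have h2 : ((0:ℝ) + ((k:ℝ) + 1) * (b - 0) / n) - ((0:ℝ) + (k:ℝ) * (b - 0) / n) = b / n := by
    field_simp; ring
  rw [h1]
  congr 1
  rw [← h2]; ring_nf

noncomputable def sigFun : ℕ → (ℝ → ℝ) → ℝ → ℝ
  | 0, g, t => g t - g 0
  | (k+1), g, t => ∫ s in (0:ℝ)..t, sigFun k g s

lemma sigFun_cont {g : ℝ → ℝ} (hg : Continuous g) : ∀ k, Continuous (sigFun k g) := by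
  intro k
  induction k with
  | zero => exact hg.sub continuous_const
  | succ k ih =>
    exact intervalIntegral.continuous_primitive (fun _ _ => ih.intervalIntegrable _ _) 0

lemma sigFun_zero (g : ℝ → ℝ) : ∀ k, sigFun k g 0 = 0 := by
  intro k
  cases k with
  | zero => simp [sigFun]
  | succ k => simp [sigFun]

lemma sigFun_sub {g₁ g₂ : ℝ → ℝ} (h₁ : Continuous g₁) (h₂ : Continuous g₂) :
    ∀ k t, sigFun k (fun s => g₁ s - g₂ s) t = sigFun k g₁ t - sigFun k g₂ t := by
  intro k
  induction k with
  | zero => intro t; simp [sigFun]; ring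
  | succ k ih =>
    intro t
    simp only [sigFun]
    rw [← intervalIntegral.integral_sub ((sigFun_cont h₁ k).intervalIntegrable _ _)
      ((sigFun_cont h₂ k).intervalIntegrable _ _)]
    exact intervalIntegral.integral_congr (fun s _ => ih s)

lemma sigFun_hasDerivAt {g : ℝ → ℝ} (hg : Continuous g) (k : ℕ) (x : ℝ) :
    HasDerivAt (sigFun (k+1) g) (sigFun k g x) x := by
  have := ((sigFun_cont hg k).integral_hasStrictDerivAt 0 x).hasDerivAt
  exact this

lemma moment_step {g : ℝ → ℝ} (hg : Continuous g) (T : ℝ) (j k : ℕ) :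
    (∫ s in (0:ℝ)..T, (T - s)^(k+1) * sigFun j g s)
      = ((k:ℝ)+1) * ∫ s in (0:ℝ)..T, (T - s)^k * sigFun (j+1) g s := by
  have hu : ∀ x ∈ Set.uIcc (0:ℝ) T,
      HasDerivAt (fun s => (T - s)^(k+1)) (-(((k:ℝ)+1) * (T - x)^k)) x := by
    intro x _
    have h1 : HasDerivAt (fun s : ℝ => T - s) (-1) x := by
      simpa using (hasDerivAt_id x).const_sub T
    have := h1.fun_pow (k+1)
    refine this.congr_deriv ?_
    push_cast
    ring
  have hv : ∀ x ∈ Set.uIcc (0:ℝ) T,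
      HasDerivAt (sigFun (j+1) g) (sigFun j g x) x := fun x _ => sigFun_hasDerivAt hg j x
  have H := intervalIntegral.integral_mul_deriv_eq_deriv_mul hu hv
    ((continuous_const.mul ((continuous_const.sub continuous_id).pow k)).neg.intervalIntegrable _ _)
    ((sigFun_cont hg j).intervalIntegrable _ _)
  rw [H]
  rw [sigFun_zero]
  simp only [sub_self, zero_pow (Nat.succ_ne_zero k), zero_mul, mul_zero, sub_zero, zero_sub]
  rw [← intervalIntegral.integral_neg]
  rw [← intervalIntegral.integral_const_mul]
  refine intervalIntegral.integral_congr fun s _ => by ring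

lemma sq_int_pos {f : ℝ → ℝ} (hf : Continuous f) {T t₀ : ℝ} (hT : 0 < T)
    (ht₀ : t₀ ∈ Set.Icc (0:ℝ) T) (hne : f t₀ ≠ 0) :
    0 < ∫ s in (0:ℝ)..T, f s * f s := by
  have hc : 0 < |f t₀| := abs_pos.mpr hne
  obtain ⟨δ, hδ, hball⟩ := Metric.continuous_iff.mp hf t₀ (|f t₀| / 2) (by positivity)
  set u := max 0 (t₀ - δ/2) with hu
  set v := min T (t₀ + δ/2) with hv
  have h0u : 0 ≤ u := le_max_left _ _
  have huv : u < v := by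
    rw [hu, hv]
    apply max_lt <;> apply lt_min
    · exact hT
    · linarith [ht₀.1]
    · linarith [ht₀.2]
    · linarith
  have hvT : v ≤ T := min_le_left _ _
  have hlow : ∀ s ∈ Set.Icc u v, |f t₀| / 2 ≤ |f s| := by
    intro s hs
    have hd : dist s t₀ < δ := by
      rw [Real.dist_eq, abs_lt]
      constructor
      · have : t₀ - δ/2 ≤ u := le_max_right _ _
        have := hs.1; linarith
      · have : v ≤ t₀ + δ/2 := min_le_right _ _
        have := hs.2; linarith
    have := hball s hd
    rw [Real.dist_eq] at this
    have h1 : |f t₀| - |f s| ≤ |f s - f t₀| := by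
      rw [abs_sub_comm]; exact abs_sub_abs_le_abs_sub _ _
    linarith
  have hsplit : (∫ s in (0:ℝ)..T, f s * f s)
      = (∫ s in (0:ℝ)..u, f s * f s) + (∫ s in u..v, f s * f s) + (∫ s in v..T, f s * f s) := by
    rw [intervalIntegral.integral_add_adjacent_intervals ((show Continuous fun s => f s * f s from hf.mul hf).intervalIntegrable _ _)
      ((show Continuous fun s => f s * f s from hf.mul hf).intervalIntegrable _ _),
      intervalIntegral.integral_add_adjacent_intervals ((show Continuous fun s => f s * f s from hf.mul hf).intervalIntegrable _ _)
      ((show Continuous fun s => f s * f s from hf.mul hf).intervalIntegrable _ _)]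
  have h1 : 0 ≤ ∫ s in (0:ℝ)..u, f s * f s :=
    intervalIntegral.integral_nonneg h0u (fun s _ => mul_self_nonneg _)
  have h3 : 0 ≤ ∫ s in v..T, f s * f s :=
    intervalIntegral.integral_nonneg hvT (fun s _ => mul_self_nonneg _)
  have h2 : (v - u) * ((|f t₀|/2) * (|f t₀|/2)) ≤ ∫ s in u..v, f s * f s := by
    have := intervalIntegral.integral_mono_on huv.le
      (intervalIntegrable_const (μ := volume) (c := (|f t₀|/2) * (|f t₀|/2)))
      ((show Continuous fun s => f s * f s from hf.mul hf).intervalIntegrable _ _)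
      (fun s hs => by
        have := hlow s hs
        calc (|f t₀|/2) * (|f t₀|/2) ≤ |f s| * |f s| :=
              mul_le_mul this this (by positivity) (abs_nonneg _)
          _ = f s * f s := abs_mul_abs_self _
        )
    rw [intervalIntegral.integral_const, smul_eq_mul] at this
    linarith [this]
  have hpos : 0 < (v - u) * ((|f t₀|/2) * (|f t₀|/2)) := by
    apply mul_pos (by linarith) (by positivity)
  rw [hsplit]; linarith

lemma zero_of_sig_zero {f : ℝ → ℝ} (hf : Continuous f) {T : ℝ} (hT : 0 < T)
    (hf0 : f 0 = 0) (hz : ∀ k, sigFun k f T = 0) : ∀ t ∈ Set.Icc (0:ℝ) T, f t = 0 := by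
  have hm : ∀ k j, (∫ s in (0:ℝ)..T, (T - s)^k * sigFun j f s) = 0 := by
    intro k
    induction k with
    | zero =>
      intro j
      simp only [pow_zero, one_mul]
      have : (∫ s in (0:ℝ)..T, sigFun j f s) = sigFun (j+1) f T := rfl
      rw [this]; exact hz (j+1)
    | succ k ih =>
      intro j
      rw [moment_step hf T j k, ih (j+1), mul_zero]
  have hm0 : ∀ k : ℕ, (∫ s in (0:ℝ)..T, (T - s)^k * f s) = 0 := by
    intro k
    have := hm k 0
    have he : ∀ s, sigFun 0 f s = f s := fun s => by simp [sigFun, hf0]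
    simpa only [he] using this
  -- polynomial moments
  have hpolyT : ∀ p : Polynomial ℝ, (∫ s in (0:ℝ)..T, p.eval (T - s) * f s) = 0 := by
    intro p
    rw [show (fun s => p.eval (T - s) * f s)
        = fun s => ∑ i ∈ Finset.range (p.natDegree + 1), p.coeff i * ((T - s)^i * f s) from ?_]
    · rw [intervalIntegral.integral_finset_sum (μ := volume)
        (f := fun i s => p.coeff i * ((T - s)^i * f s))
        (fun i _ => (Continuous.intervalIntegrable (by fun_prop) _ _))]
      refine Finset.sum_eq_zero fun i _ => ?_
      rw [intervalIntegral.integral_const_mul, hm0 i, mul_zero]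
    · funext s
      rw [Polynomial.eval_eq_sum_range, Finset.sum_mul]
      refine Finset.sum_congr rfl fun i _ => by ring
  have hpoly : ∀ q : Polynomial ℝ, (∫ s in (0:ℝ)..T, q.eval s * f s) = 0 := by
    intro q
    have := hpolyT (q.comp (Polynomial.C T - Polynomial.X))
    have hev : ∀ s : ℝ, (q.comp (Polynomial.C T - Polynomial.X)).eval (T - s) = q.eval s := by
      intro s
      rw [Polynomial.eval_comp]
      simp
    simpa only [hev] using this
  -- ∫ f² = 0
  have hsq : (∫ s in (0:ℝ)..T, f s * f s) = 0 := by
    obtain ⟨M, hM⟩ := isCompact_Icc.exists_bound_of_continuousOn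
      (s := Set.Icc (0:ℝ) T) hf.continuousOn
    have hM0 : 0 ≤ M := le_trans (norm_nonneg (f 0)) (hM 0 (by constructor <;> [rfl; exact hT.le]))
    set I := ∫ s in (0:ℝ)..T, f s * f s with hI
    have hbnd : ∀ ε > 0, |I| ≤ M * T * ε := by
      intro ε hε
      obtain ⟨p, hp⟩ := exists_polynomial_near_of_continuousOn 0 T f hf.continuousOn ε hε
      have hdecomp : I = (∫ s in (0:ℝ)..T, f s * (f s - p.eval s))
          + ∫ s in (0:ℝ)..T, p.eval s * f s := by
        rw [← intervalIntegral.integral_add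
          ((show Continuous fun s => f s * (f s - p.eval s) from hf.mul (hf.sub p.continuous)).intervalIntegrable _ _)
          ((show Continuous fun s => p.eval s * f s from p.continuous.mul hf).intervalIntegrable _ _)]
        exact intervalIntegral.integral_congr fun s _ => by ring
      rw [hdecomp, hpoly p, add_zero]
      have : ‖∫ s in (0:ℝ)..T, f s * (f s - p.eval s)‖ ≤ (M * ε) * |T - 0| := by
        apply intervalIntegral.norm_integral_le_of_norm_le_const
        intro x hx
        rw [Set.uIoc_of_le hT.le] at hx
        have hxm : x ∈ Set.Icc (0:ℝ) T := ⟨hx.1.le, hx.2⟩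
        rw [Real.norm_eq_abs, abs_mul]
        apply mul_le_mul (hM x hxm) _ (abs_nonneg _) hM0
        rw [abs_sub_comm]
        exact (hp x hxm).le
      rw [Real.norm_eq_abs] at this
      calc |∫ s in (0:ℝ)..T, f s * (f s - p.eval s)| ≤ (M * ε) * |T - 0| := this
        _ = M * T * ε := by rw [sub_zero, abs_of_pos hT]; ring
    by_contra hne
    have habs : 0 < |I| := abs_pos.mpr hne
    have := hbnd (|I| / (M * T + 1)) (by positivity)
    have hlt : M * T * (|I| / (M * T + 1)) < |I| := by
      rw [mul_div_assoc', div_lt_iff₀ (by positivity)]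
      nlinarith
    linarith
  intro t ht
  by_contra hne
  exact absurd hsq (ne_of_gt (sq_int_pos hf hT ht hne))

-- part 5
lemma iterInt_replicate' {m : ℕ} (Z : ℝ → Fin (m+1) → ℝ) (j : Fin (m+1))
    (hZ0 : ∀ s, Z s 0 = s) (hZj : Continuous fun s => Z s j) :
    ∀ (k : ℕ) {t : ℝ}, 0 ≤ t →
      iterInt Z (List.replicate k 0 ++ [j]) t = sigFun k (fun s => Z s j) t := by
  intro k
  induction k with
  | zero =>
    intro t ht
    simp only [List.replicate, List.nil_append, iterInt]
    rw [rsInt_one]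
    simp [sigFun]
  | succ k ih =>
    intro t ht
    simp only [List.replicate_succ, List.cons_append, iterInt, List.append_eq]
    rw [rsInt_congr ht (fun s hs => ih hs.1) (fun s _ => hZ0 s)]
    rw [rsInt_id_eq_integral (sigFun_cont hZj k) ht]
    simp [sigFun]


end Sig9

open Sig9 in
/-- Uniqueness of the signature for time-extended paths: two continuous bounded
variation paths `X, Y : [0,T] → ℝ^m` with `X(0) = Y(0)` have equal signatures
`S_{0,T}((t, X(t))) = S_{0,T}((t, Y(t)))` (i.e. all iterated integrals of the
time-extended paths coincide) if and only if `X = Y` on `[0,T]`. -/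
theorem stmt_9 {m : ℕ} (T : ℝ) (hT : 0 < T) (X Y : ℝ → Fin m → ℝ)
    (hXc : ContinuousOn X (Set.Icc 0 T)) (hYc : ContinuousOn Y (Set.Icc 0 T))
    (hXbv : ∀ i, BoundedVariationOn (fun t => X t i) (Set.Icc 0 T))
    (hYbv : ∀ i, BoundedVariationOn (fun t => Y t i) (Set.Icc 0 T))
    (h0 : X 0 = Y 0) :
    (∀ w : List (Fin (m + 1)),
        iterInt (fun t => Fin.cons t (X t)) w T = iterInt (fun t => Fin.cons t (Y t)) w T)
      ↔ ∀ t ∈ Set.Icc 0 T, X t = Y t := by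
  constructor
  · intro hsig t ht
    set π : ℝ → ℝ := fun s => max 0 (min s T) with hπ
    have hπc : Continuous π := continuous_const.max (continuous_id.min continuous_const)
    have hπmem : ∀ s, π s ∈ Set.Icc (0:ℝ) T :=
      fun s => ⟨le_max_left _ _, max_le hT.le (min_le_right _ _)⟩
    have hπid : ∀ s ∈ Set.Icc (0:ℝ) T, π s = s := by
      intro s hs
      rw [hπ]
      simp only [min_eq_left hs.2, max_eq_right hs.1]
    set X' : ℝ → Fin m → ℝ := fun s => X (π s) with hX'
    set Y' : ℝ → Fin m → ℝ := fun s => Y (π s) with hY'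
    have hX'c : ∀ i, Continuous fun s => X' s i :=
      fun i => (continuous_apply i).comp (hXc.comp_continuous hπc hπmem)
    have hY'c : ∀ i, Continuous fun s => Y' s i :=
      fun i => (continuous_apply i).comp (hYc.comp_continuous hπc hπmem)
    have hXeq : ∀ s ∈ Set.Icc (0:ℝ) T, X' s = X s := fun s hs => by rw [hX']; simp [hπid s hs]
    have hYeq : ∀ s ∈ Set.Icc (0:ℝ) T, Y' s = Y s := fun s hs => by rw [hY']; simp [hπid s hs]
    funext i
    set f : ℝ → ℝ := fun s => X' s i - Y' s i with hfdef
    have hfc : Continuous f := (hX'c i).sub (hY'c i)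
    have hf0 : f 0 = 0 := by
      have : π 0 = 0 := hπid 0 ⟨le_refl _, hT.le⟩
      simp only [hfdef, hX', hY', this, h0, sub_self]
    have hkey : ∀ k : ℕ, sigFun k f T = 0 := by
      intro k
      have h1 := hsig (List.replicate k 0 ++ [Fin.succ i])
      have h2 : iterInt (fun u => Fin.cons u (X u)) (List.replicate k 0 ++ [Fin.succ i]) T
          = iterInt (fun u => Fin.cons u (X' u)) (List.replicate k 0 ++ [Fin.succ i]) T :=
        iterInt_congr _ hT.le (fun s hs => by rw [hXeq s hs])
      have h3 : iterInt (fun u => Fin.cons u (Y u)) (List.replicate k 0 ++ [Fin.succ i]) T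
          = iterInt (fun u => Fin.cons u (Y' u)) (List.replicate k 0 ++ [Fin.succ i]) T :=
        iterInt_congr _ hT.le (fun s hs => by rw [hYeq s hs])
      have hx : (fun s => (Fin.cons s (X' s) : Fin (m+1) → ℝ) (Fin.succ i)) = fun s => X' s i := by
        funext s; exact Fin.cons_succ _ _ _
      have hy : (fun s => (Fin.cons s (Y' s) : Fin (m+1) → ℝ) (Fin.succ i)) = fun s => Y' s i := by
        funext s; exact Fin.cons_succ _ _ _
      rw [h2, h3,
        iterInt_replicate' (fun u => Fin.cons u (X' u)) (Fin.succ i)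
          (fun s => Fin.cons_zero _ _) (by rw [hx]; exact hX'c i) k hT.le,
        iterInt_replicate' (fun u => Fin.cons u (Y' u)) (Fin.succ i)
          (fun s => Fin.cons_zero _ _) (by rw [hy]; exact hY'c i) k hT.le] at h1
      rw [hx, hy] at h1
      rw [hfdef, sigFun_sub (hX'c i) (hY'c i) k T, h1, sub_self]
    have := zero_of_sig_zero hfc hT hf0 hkey t ht
    have hfin : X' t i - Y' t i = 0 := this
    have hxt := hXeq t ht
    have hyt := hYeq t ht
    rw [hxt, hyt] at hfin
    linarith
  · intro heq w
    exact iterInt_congr w hT.le (fun s hs => by rw [heq s hs])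
end

section
/- Universal approximation by signatures: Let q ≥ 1, K ⊂ L^q([0,T]; R^m) compact, and g : L^q([0,T]; R^m) → R continuous. Then for every ε > 0 there exists a finitely supported linear functional ℓ on the signature (a 'word') such that sup_{u ∈ K} |g(u) − ⟨ℓ, S_{0,T}(Û)⟩| < ε, where Û(t) = (t, ∫_0^t u(s)^⊤ ds)^⊤. -/
open MeasureTheory

/-- The time-extended integrated control `Û(t) = (t, ∫_0^t u(s)^⊤ ds)^⊤`. -/
noncomputable def hatU {m : ℕ} (u : ℝ → Fin m → ℝ) : ℝ → Fin (m + 1) → ℝ :=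
  fun t => Fin.cons t (fun i => ∫ s in (0:ℝ)..t, u s i)

namespace Stmt13

open Set Filter intervalIntegral Finset

/-! ### Convergence of left Riemann–Stieltjes sums for absolutely continuous integrators -/

theorem rsInt_eq {f G ρ f' : ℝ → ℝ} {b : ℝ} (hb : 0 ≤ b)
    (hff' : ∀ x ∈ Set.Icc (0:ℝ) b, f x = f' x)
    (hf' : ContinuousOn f' (Set.Icc (0:ℝ) b))
    (hρ : IntegrableOn ρ (Set.Icc (0:ℝ) b))
    (hG : ∀ x ∈ Set.Icc (0:ℝ) b, G x = ∫ s in (0:ℝ)..x, ρ s) :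
    rsInt f G 0 b = ∫ s in (0:ℝ)..b, f' s * ρ s := by
  have hfρ : IntegrableOn (fun s => f' s * ρ s) (Set.Icc (0:ℝ) b) :=
    IntegrableOn.continuousOn_mul hf' hρ isCompact_Icc
  rw [rsInt]
  refine Filter.Tendsto.limUnder_eq ?_
  rw [Metric.tendsto_atTop]
  intro ε hε
  set C : ℝ := ∫ s in (0:ℝ)..b, |ρ s| with hCdef
  have hC0 : 0 ≤ C := intervalIntegral.integral_nonneg hb (fun x _ => abs_nonneg _)
  set ε' : ℝ := ε / (2 * (C + 1)) with hε'def
  have hε' : 0 < ε' := by positivity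
  have hUC := isCompact_Icc.uniformContinuousOn_of_continuous hf'
  rw [Metric.uniformContinuousOn_iff] at hUC
  obtain ⟨δ, hδ, hδ'⟩ := hUC ε' hε'
  obtain ⟨n₀, hn₀⟩ := exists_nat_gt (b / δ)
  refine ⟨n₀ + 1, fun n hn => ?_⟩
  have hnn : 0 < n := lt_of_lt_of_le (Nat.succ_pos _) hn
  have hnR : (0:ℝ) < n := by exact_mod_cast hnn
  set P : ℕ → ℝ := fun k => k * b / n with hPdef
  have hP0 : P 0 = 0 := by simp [hPdef]
  have hPn : P n = b := by show (n:ℝ) * b / n = b; field_simp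
  have hPmem : ∀ k ≤ n, P k ∈ Set.Icc (0:ℝ) b := by
    intro k hk
    refine ⟨by positivity, ?_⟩
    rw [hPdef]
    rw [div_le_iff₀ hnR]
    calc (k:ℝ) * b ≤ (n:ℝ) * b := by
          exact mul_le_mul_of_nonneg_right (by exact_mod_cast hk) hb
    _ = b * n := mul_comm _ _
  have hstep : ∀ k : ℕ, P (k + 1) = P k + b / n := by
    intro k
    rw [hPdef]
    push_cast
    field_simp
  have hPle : ∀ k : ℕ, P k ≤ P (k + 1) := by
    intro k
    rw [hstep k]
    have : 0 ≤ b / n := by positivity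
    linarith
  have hbn : b / (n:ℝ) < δ := by
    have h1 : (n₀:ℝ) < n := by exact_mod_cast Nat.lt_of_succ_le hn
    rw [div_lt_iff₀ hnR]
    have h2 : b / δ < (n:ℝ) := lt_trans hn₀ h1
    rw [div_lt_iff₀ hδ] at h2
    linarith
  have hsub : ∀ k : ℕ, k + 1 ≤ n → Set.uIcc (P k) (P (k + 1)) ⊆ Set.Icc (0:ℝ) b := by
    intro k hk
    rw [Set.uIcc_of_le (hPle k)]
    exact Set.Icc_subset_Icc (hPmem k (by omega)).1 (hPmem (k + 1) hk).2
  have hsub0 : ∀ k : ℕ, k ≤ n → Set.uIcc (0:ℝ) (P k) ⊆ Set.Icc (0:ℝ) b := by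
    intro k hk
    rw [Set.uIcc_of_le (hPmem k hk).1]
    exact Set.Icc_subset_Icc le_rfl (hPmem k hk).2
  have hρint : ∀ k : ℕ, k + 1 ≤ n → IntervalIntegrable ρ volume (P k) (P (k + 1)) :=
    fun k hk => (hρ.mono_set (hsub k hk)).intervalIntegrable
  have hρ0x : ∀ k : ℕ, k ≤ n → IntervalIntegrable ρ volume 0 (P k) :=
    fun k hk => (hρ.mono_set (hsub0 k hk)).intervalIntegrable
  have hfρint : ∀ k : ℕ, k + 1 ≤ n →
      IntervalIntegrable (fun s => f' s * ρ s) volume (P k) (P (k + 1)) :=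
    fun k hk => (hfρ.mono_set (hsub k hk)).intervalIntegrable
  have habsint : ∀ k : ℕ, k + 1 ≤ n →
      IntervalIntegrable (fun s => |ρ s|) volume (P k) (P (k + 1)) :=
    fun k hk => MeasureTheory.IntegrableOn.intervalIntegrable ((hρ.mono_set (hsub k hk)).abs)
  have hIsum : ∫ s in (0:ℝ)..b, f' s * ρ s
      = ∑ k ∈ Finset.range n, ∫ s in P k..P (k + 1), f' s * ρ s := by
    rw [intervalIntegral.sum_integral_adjacent_intervals
      (fun k hk => hfρint k (by omega)), hP0, hPn]
  have hCsum : C = ∑ k ∈ Finset.range n, ∫ s in P k..P (k + 1), |ρ s| := by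
    rw [hCdef, intervalIntegral.sum_integral_adjacent_intervals
      (fun k hk => habsint k (by omega)), hP0, hPn]
  simp only [zero_add, sub_zero]
  have hP1 : ∀ k : ℕ, ((k:ℝ) + 1) * b / n = P (k + 1) := by
    intro k; rw [hPdef]; push_cast; ring
  have hterm : ∀ k ∈ Finset.range n,
      f ((k:ℝ) * b / n) * (G (((k:ℝ) + 1) * b / n) - G ((k:ℝ) * b / n))
        = f' (P k) * ∫ s in P k..P (k + 1), ρ s := by
    intro k hk
    have hk' : k + 1 ≤ n := Finset.mem_range.1 hk
    rw [hP1 k]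
    show f (P k) * (G (P (k + 1)) - G (P k)) = _
    rw [hff' _ (hPmem k (by omega)), hG _ (hPmem (k + 1) hk'), hG _ (hPmem k (by omega)),
      intervalIntegral.integral_interval_sub_left (hρ0x (k + 1) hk') (hρ0x k (by omega))]
  rw [Finset.sum_congr rfl hterm, Real.dist_eq, hIsum, ← Finset.sum_sub_distrib]
  have hterm2 : ∀ k ∈ Finset.range n,
      f' (P k) * (∫ s in P k..P (k + 1), ρ s) - (∫ s in P k..P (k + 1), f' s * ρ s)
        = ∫ s in P k..P (k + 1), (f' (P k) - f' s) * ρ s := by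
    intro k hk
    have hk' : k + 1 ≤ n := Finset.mem_range.1 hk
    have heq : (fun s => (f' (P k) - f' s) * ρ s)
        = fun s => f' (P k) * ρ s - f' s * ρ s := by funext s; ring
    rw [heq, intervalIntegral.integral_sub ((hρint k hk').const_mul _) (hfρint k hk'),
      intervalIntegral.integral_const_mul]
  rw [Finset.sum_congr rfl hterm2]
  have hbound : ∀ k ∈ Finset.range n,
      |∫ s in P k..P (k + 1), (f' (P k) - f' s) * ρ s|
        ≤ ε' * ∫ s in P k..P (k + 1), |ρ s| := by
    intro k hk
    have hk' : k + 1 ≤ n := Finset.mem_range.1 hk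
    have h1 : ∀ᵐ t ∂volume.restrict (Set.uIoc (P k) (P (k + 1))),
        ‖(f' (P k) - f' t) * ρ t‖ ≤ ε' * |ρ t| := by
      refine (MeasureTheory.ae_restrict_mem measurableSet_uIoc).mono fun t ht => ?_
      rw [Set.uIoc_of_le (hPle k)] at ht
      have htmem : t ∈ Set.Icc (0:ℝ) b :=
        ⟨le_trans (hPmem k (by omega)).1 ht.1.le, le_trans ht.2 (hPmem (k + 1) hk').2⟩
      have hdist : dist (P k) t < δ := by
        rw [Real.dist_eq, abs_sub_comm, abs_of_nonneg (by linarith [ht.1.le] : 0 ≤ t - P k)]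
        have := hstep k
        have h2 : t ≤ P k + b / n := by rw [← hstep k]; exact ht.2
        linarith [hbn]
      have hf'd := hδ' _ (hPmem k (by omega)) _ htmem hdist
      rw [Real.dist_eq] at hf'd
      rw [norm_mul, Real.norm_eq_abs, Real.norm_eq_abs]
      exact mul_le_mul_of_nonneg_right hf'd.le (abs_nonneg _)
    have h2 := intervalIntegral.norm_integral_le_abs_of_norm_le h1
      ((habsint k hk').const_mul ε')
    rw [Real.norm_eq_abs] at h2
    refine h2.trans ?_
    rw [intervalIntegral.integral_const_mul, abs_of_nonneg]
    exact mul_nonneg hε'.le (intervalIntegral.integral_nonneg (hPle k) fun x _ => abs_nonneg _)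
  calc |∑ k ∈ Finset.range n, ∫ s in P k..P (k + 1), (f' (P k) - f' s) * ρ s|
      ≤ ∑ k ∈ Finset.range n, |∫ s in P k..P (k + 1), (f' (P k) - f' s) * ρ s| :=
        Finset.abs_sum_le_sum_abs _ _
    _ ≤ ∑ k ∈ Finset.range n, ε' * ∫ s in P k..P (k + 1), |ρ s| :=
        Finset.sum_le_sum hbound
    _ = ε' * C := by rw [← Finset.mul_sum, ← hCsum]
    _ < ε := by
        rw [hε'def, div_mul_eq_mul_div, div_lt_iff₀ (by positivity)]
        nlinarith

/-! ### The "nice" iterated integrals -/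

/-- Iterated (Lebesgue) integrals driven by densities `ρ i`. -/
noncomputable def Jf {m : ℕ} (ρ : Fin (m + 1) → ℝ → ℝ) : List (Fin (m + 1)) → ℝ → ℝ
  | [], _ => 1
  | i :: w, t => ∫ s in (0:ℝ)..t, Jf ρ w s * ρ i s

variable {m : ℕ} {T : ℝ} {ρ : Fin (m + 1) → ℝ → ℝ}

theorem Jf_contOn (hT : 0 ≤ T) (hρ : ∀ i, IntegrableOn (ρ i) (Set.Icc 0 T)) :
    ∀ w, ContinuousOn (Jf ρ w) (Set.Icc 0 T) := by
  intro w
  induction w with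
  | nil => exact continuousOn_const
  | cons i w ih =>
    show ContinuousOn (fun t => ∫ s in (0:ℝ)..t, Jf ρ w s * ρ i s) _
    have hint : IntegrableOn (fun s => Jf ρ w s * ρ i s) (Set.uIcc 0 T) := by
      rw [Set.uIcc_of_le hT]
      exact IntegrableOn.continuousOn_mul ih (hρ i) isCompact_Icc
    have h2 := intervalIntegral.continuousOn_primitive_interval hint
    rwa [Set.uIcc_of_le hT] at h2

theorem Jf_mul_integrableOn (hT : 0 ≤ T) (hρ : ∀ i, IntegrableOn (ρ i) (Set.Icc 0 T))
    (w : List (Fin (m + 1))) (i : Fin (m + 1)) :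
    IntegrableOn (fun s => Jf ρ w s * ρ i s) (Set.Icc 0 T) :=
  IntegrableOn.continuousOn_mul (Jf_contOn hT hρ w) (hρ i) isCompact_Icc

/-! ### Shuffles -/

/-- All interleavings (shuffles) of two words, with multiplicity. -/
def shuf {γ : Type*} : List γ → List γ → List (List γ)
  | [], v => [v]
  | a :: w, [] => [a :: w]
  | a :: w, b :: v => ((shuf w (b :: v)).map (a :: ·)) ++ ((shuf (a :: w) v).map (b :: ·))
  termination_by w v => w.length + v.length

theorem parts {α β : ℝ → ℝ} {T : ℝ} (hα : IntegrableOn α (Set.Icc 0 T))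
    (hβ : IntegrableOn β (Set.Icc 0 T)) {t : ℝ} (ht : t ∈ Set.Icc (0:ℝ) T) :
    (∫ s in (0:ℝ)..t, α s) * (∫ s in (0:ℝ)..t, β s)
      = ∫ s in (0:ℝ)..t, ((∫ r in (0:ℝ)..s, α r) * β s + α s * ∫ r in (0:ℝ)..s, β r) := by
  have h0t : (0:ℝ) ≤ t := ht.1
  have hsub : Set.Icc (0:ℝ) t ⊆ Set.Icc 0 T := Set.Icc_subset_Icc le_rfl ht.2
  have hα1 : IntegrableOn α (Set.Icc 0 t) := hα.mono_set hsub
  have hβ1 : IntegrableOn β (Set.Icc 0 t) := hβ.mono_set hsub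
  have hα' : IntegrableOn α (Set.Ioc 0 t) := hα1.mono_set Set.Ioc_subset_Icc_self
  have hβ' : IntegrableOn β (Set.Ioc 0 t) := hβ1.mono_set Set.Ioc_subset_Icc_self
  have hAc : ContinuousOn (fun s => ∫ r in (0:ℝ)..s, α r) (Set.Icc 0 t) := by
    have h2 := intervalIntegral.continuousOn_primitive_interval
      (a := 0) (b := t) (f := α) (μ := volume) ?_
    · rwa [Set.uIcc_of_le h0t] at h2
    · rw [Set.uIcc_of_le h0t]; exact hα1
  have hBc : ContinuousOn (fun s => ∫ r in (0:ℝ)..s, β r) (Set.Icc 0 t) := by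
    have h2 := intervalIntegral.continuousOn_primitive_interval
      (a := 0) (b := t) (f := β) (μ := volume) ?_
    · rwa [Set.uIcc_of_le h0t] at h2
    · rw [Set.uIcc_of_le h0t]; exact hβ1
  have hAβ : IntegrableOn (fun s => (∫ r in (0:ℝ)..s, α r) * β s) (Set.Ioc 0 t) :=
    (IntegrableOn.continuousOn_mul hAc hβ1 isCompact_Icc).mono_set Set.Ioc_subset_Icc_self
  have hαB : IntegrableOn (fun s => α s * ∫ r in (0:ℝ)..s, β r) (Set.Ioc 0 t) :=
    (IntegrableOn.mul_continuousOn hα1 hBc isCompact_Icc).mono_set Set.Ioc_subset_Icc_self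
  rw [intervalIntegral.integral_of_le h0t, intervalIntegral.integral_of_le h0t,
    intervalIntegral.integral_of_le h0t, MeasureTheory.integral_add hAβ hαB]
  set ν : Measure ℝ := volume.restrict (Set.Ioc (0:ℝ) t) with hν
  have hprod : Integrable (fun z : ℝ × ℝ => α z.1 * β z.2) (ν.prod ν) :=
    hα'.mul_prod hβ'
  have hS : MeasurableSet {z : ℝ × ℝ | z.1 ≤ z.2} :=
    measurableSet_le measurable_fst measurable_snd
  have hsplit := MeasureTheory.integral_add_compl hS hprod
  rw [← MeasureTheory.integral_prod_mul (μ := ν) (ν := ν) α β, ← hsplit]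
  have hpiece1 : (∫ z in {z : ℝ × ℝ | z.1 ≤ z.2}, α z.1 * β z.2 ∂(ν.prod ν))
      = ∫ s in Set.Ioc (0:ℝ) t, (∫ r in (0:ℝ)..s, α r) * β s := by
    rw [← MeasureTheory.integral_indicator hS,
      MeasureTheory.integral_prod_symm _ (hprod.indicator hS)]
    refine MeasureTheory.setIntegral_congr_fun measurableSet_Ioc fun y hy => ?_
    have hyt : Set.Iic y ∩ Set.Ioc (0:ℝ) t = Set.Ioc 0 y := by
      ext x
      simp only [Set.mem_inter_iff, Set.mem_Iic, Set.mem_Ioc]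
      exact ⟨fun h => ⟨h.2.1, h.1⟩, fun h => ⟨h.2, h.1, h.2.trans hy.2⟩⟩
    have hindeq : (fun x => Set.indicator {z : ℝ × ℝ | z.1 ≤ z.2}
          (fun z => α z.1 * β z.2) (x, y))
        = fun x => Set.indicator (Set.Iic y) (fun x => α x * β y) x := by
      funext x
      simp only [Set.indicator_apply, Set.mem_setOf_eq, Set.mem_Iic]
    rw [hindeq, MeasureTheory.integral_indicator measurableSet_Iic, hν,
      MeasureTheory.Measure.restrict_restrict measurableSet_Iic, hyt,
      MeasureTheory.integral_mul_const, ← intervalIntegral.integral_of_le hy.1.le]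
  have hpiece2 : (∫ z in {z : ℝ × ℝ | z.1 ≤ z.2}ᶜ, α z.1 * β z.2 ∂(ν.prod ν))
      = ∫ s in Set.Ioc (0:ℝ) t, α s * ∫ r in (0:ℝ)..s, β r := by
    rw [← MeasureTheory.integral_indicator hS.compl,
      MeasureTheory.integral_prod _ (hprod.indicator hS.compl)]
    refine MeasureTheory.setIntegral_congr_fun measurableSet_Ioc fun x hx => ?_
    have hxt : Set.Iio x ∩ Set.Ioc (0:ℝ) t = Set.Ioo 0 x := by
      ext y
      simp only [Set.mem_inter_iff, Set.mem_Iio, Set.mem_Ioc, Set.mem_Ioo]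
      exact ⟨fun h => ⟨h.2.1, h.1⟩, fun h => ⟨h.2, h.1, (h.2.le).trans hx.2⟩⟩
    have hindeq : (fun y => Set.indicator ({z : ℝ × ℝ | z.1 ≤ z.2}ᶜ)
          (fun z => α z.1 * β z.2) (x, y))
        = fun y => Set.indicator (Set.Iio x) (fun y => α x * β y) y := by
      funext y
      simp only [Set.indicator_apply, Set.mem_compl_iff, Set.mem_setOf_eq, Set.mem_Iio, not_le]
    rw [hindeq, MeasureTheory.integral_indicator measurableSet_Iio, hν,
      MeasureTheory.Measure.restrict_restrict measurableSet_Iio, hxt,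
      MeasureTheory.integral_const_mul, ← MeasureTheory.integral_Ioc_eq_integral_Ioo,
      ← intervalIntegral.integral_of_le hx.1.le]
  rw [hpiece1, hpiece2]

theorem Jf_mul_intInt (hT : 0 ≤ T) (hρ : ∀ i, IntegrableOn (ρ i) (Set.Icc 0 T))
    (σ : List (Fin (m + 1))) (i : Fin (m + 1)) {t : ℝ} (ht : t ∈ Set.Icc (0:ℝ) T) :
    IntervalIntegrable (fun s => Jf ρ σ s * ρ i s) volume 0 t := by
  refine MeasureTheory.IntegrableOn.intervalIntegrable
    ((Jf_mul_integrableOn hT hρ σ i).mono_set ?_)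
  rw [Set.uIcc_of_le ht.1]
  exact Set.Icc_subset_Icc le_rfl ht.2

theorem Jf_sum_contOn (hT : 0 ≤ T) (hρ : ∀ i, IntegrableOn (ρ i) (Set.Icc 0 T))
    (L : List (List (Fin (m + 1)))) :
    ContinuousOn (fun s => (L.map fun σ => Jf ρ σ s).sum) (Set.Icc 0 T) := by
  induction L with
  | nil => simpa using continuousOn_const
  | cons σ L ih =>
    simp only [List.map_cons, List.sum_cons]
    exact (Jf_contOn hT hρ σ).add ih

theorem Jf_sum_mul_intInt (hT : 0 ≤ T) (hρ : ∀ i, IntegrableOn (ρ i) (Set.Icc 0 T))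
    (L : List (List (Fin (m + 1)))) (i : Fin (m + 1)) {t : ℝ} (ht : t ∈ Set.Icc (0:ℝ) T) :
    IntervalIntegrable (fun s => (L.map fun σ => Jf ρ σ s).sum * ρ i s) volume 0 t := by
  have h := IntegrableOn.continuousOn_mul (Jf_sum_contOn hT hρ L) (hρ i) isCompact_Icc
  refine MeasureTheory.IntegrableOn.intervalIntegrable (h.mono_set ?_)
  rw [Set.uIcc_of_le ht.1]
  exact Set.Icc_subset_Icc le_rfl ht.2

theorem Jf_sum_integral (hT : 0 ≤ T) (hρ : ∀ i, IntegrableOn (ρ i) (Set.Icc 0 T))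
    (L : List (List (Fin (m + 1)))) (i : Fin (m + 1)) {t : ℝ} (ht : t ∈ Set.Icc (0:ℝ) T) :
    (∫ s in (0:ℝ)..t, (L.map fun σ => Jf ρ σ s).sum * ρ i s)
      = (L.map fun σ => Jf ρ (i :: σ) t).sum := by
  induction L with
  | nil => simp
  | cons σ L ih =>
    simp only [List.map_cons, List.sum_cons]
    have heq : (fun s => (Jf ρ σ s + (L.map fun σ => Jf ρ σ s).sum) * ρ i s)
        = fun s => Jf ρ σ s * ρ i s + (L.map fun σ => Jf ρ σ s).sum * ρ i s := by
      funext s; ring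
    rw [heq, intervalIntegral.integral_add (Jf_mul_intInt hT hρ σ i ht)
      (Jf_sum_mul_intInt hT hρ L i ht), ih]
    rfl

theorem Jf_shuffle (hT : 0 ≤ T) (hρ : ∀ i, IntegrableOn (ρ i) (Set.Icc 0 T)) :
    ∀ w v : List (Fin (m + 1)), ∀ t ∈ Set.Icc (0:ℝ) T,
      Jf ρ w t * Jf ρ v t = ((shuf w v).map fun σ => Jf ρ σ t).sum := by
  intro w
  induction w with
  | nil => intro v t _; simp [shuf, Jf]
  | cons a w ihw =>
    intro v
    induction v with
    | nil => intro t _; simp [shuf, Jf]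
    | cons b v ihv =>
      intro t ht
      have hkey := parts (α := fun s => Jf ρ w s * ρ a s) (β := fun s => Jf ρ v s * ρ b s)
        (Jf_mul_integrableOn hT hρ w a) (Jf_mul_integrableOn hT hρ v b) ht
      rw [show Jf ρ (a :: w) t = ∫ s in (0:ℝ)..t, Jf ρ w s * ρ a s from rfl,
        show Jf ρ (b :: v) t = ∫ s in (0:ℝ)..t, Jf ρ v s * ρ b s from rfl, hkey]
      have hcongr : Set.EqOn
          (fun s => ((∫ r in (0:ℝ)..s, Jf ρ w r * ρ a r) * (Jf ρ v s * ρ b s)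
            + (Jf ρ w s * ρ a s) * ∫ r in (0:ℝ)..s, Jf ρ v r * ρ b r))
          (fun s => (((shuf (a :: w) v).map fun σ => Jf ρ σ s).sum) * ρ b s
            + (((shuf w (b :: v)).map fun σ => Jf ρ σ s).sum) * ρ a s)
          (Set.uIcc (0:ℝ) t) := by
        intro s hs
        rw [Set.uIcc_of_le ht.1] at hs
        have hsT : s ∈ Set.Icc (0:ℝ) T := ⟨hs.1, hs.2.trans ht.2⟩
        show (∫ r in (0:ℝ)..s, Jf ρ w r * ρ a r) * (Jf ρ v s * ρ b s)
            + (Jf ρ w s * ρ a s) * (∫ r in (0:ℝ)..s, Jf ρ v r * ρ b r) = _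
        rw [show (∫ r in (0:ℝ)..s, Jf ρ w r * ρ a r) = Jf ρ (a :: w) s from rfl,
          show (∫ r in (0:ℝ)..s, Jf ρ v r * ρ b r) = Jf ρ (b :: v) s from rfl]
        have h1 := ihv s hsT
        have h2 := ihw (b :: v) s hsT
        show Jf ρ (a :: w) s * (Jf ρ v s * ρ b s) + Jf ρ w s * ρ a s * Jf ρ (b :: v) s = _
        calc Jf ρ (a :: w) s * (Jf ρ v s * ρ b s) + Jf ρ w s * ρ a s * Jf ρ (b :: v) s
            = (Jf ρ (a :: w) s * Jf ρ v s) * ρ b s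
              + (Jf ρ w s * Jf ρ (b :: v) s) * ρ a s := by ring
          _ = _ := by rw [h1, h2]
      rw [intervalIntegral.integral_congr hcongr,
        intervalIntegral.integral_add (Jf_sum_mul_intInt hT hρ _ b ht)
          (Jf_sum_mul_intInt hT hρ _ a ht),
        Jf_sum_integral hT hρ _ b ht, Jf_sum_integral hT hρ _ a ht]
      rw [show shuf (a :: w) (b :: v)
          = ((shuf w (b :: v)).map (a :: ·)) ++ ((shuf (a :: w) v).map (b :: ·)) from by
            rw [shuf]]
      rw [List.map_append, List.sum_append, List.map_map, List.map_map]
      simp only [Function.comp_def]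
      ring

/-! ### Identification of `iterInt` with `Jf` -/

/-- The densities of the coordinates of `hatU u`. -/
def rho (u : ℝ → Fin m → ℝ) : Fin (m + 1) → ℝ → ℝ :=
  Fin.cons (fun _ => (1:ℝ)) (fun j s => u s j)

theorem rho_integrable (hT : 0 ≤ T) {u : ℝ → Fin m → ℝ}
    (hu : ∀ j, IntegrableOn (fun s => u s j) (Set.Icc 0 T)) :
    ∀ i, IntegrableOn (rho u i) (Set.Icc 0 T) := by
  intro i
  refine Fin.cases ?_ ?_ i
  · simp only [rho, Fin.cons_zero]
    exact integrableOn_const measure_Icc_lt_top.ne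
  · intro j; simpa only [rho, Fin.cons_succ] using hu j

theorem iterInt_eq (hT : 0 ≤ T) {u : ℝ → Fin m → ℝ}
    (hu : ∀ j, IntegrableOn (fun s => u s j) (Set.Icc 0 T)) :
    ∀ w, ∀ t ∈ Set.Icc (0:ℝ) T, iterInt (hatU u) w t = Jf (rho u) w t := by
  intro w
  induction w with
  | nil => intro t _; rfl
  | cons i w ih =>
    intro t ht
    have hIcc : Set.Icc (0:ℝ) t ⊆ Set.Icc (0:ℝ) T := Set.Icc_subset_Icc le_rfl ht.2
    show rsInt (fun s => iterInt (hatU u) w s) (fun s => hatU u s i) 0 t = _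
    rw [rsInt_eq ht.1 (f' := Jf (rho u) w) (ρ := rho u i)
      (fun x hx => ih x (hIcc hx))
      ((Jf_contOn hT (rho_integrable hT hu) w).mono hIcc)
      ((rho_integrable hT hu i).mono_set hIcc)
      ?_]
    · rfl
    · intro x hx
      refine Fin.cases ?_ ?_ i
      · show hatU u x 0 = ∫ s in (0:ℝ)..x, rho u 0 s
        rw [hatU, Fin.cons_zero]
        simp [rho]
      · intro j
        show hatU u x j.succ = ∫ s in (0:ℝ)..x, rho u j.succ s
        rw [hatU, Fin.cons_succ]
        simp [rho]

/-! ### Moment words -/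

/-- The word computing the `k`-th moment of coordinate `j`. -/
def mw {m : ℕ} (j : Fin m) (k : ℕ) : List (Fin (m + 1)) :=
  j.succ :: List.replicate k 0

theorem Jf_replicate (u : ℝ → Fin m → ℝ) :
    ∀ (k : ℕ) (t : ℝ), Jf (rho u) (List.replicate k 0) t = t ^ k / (Nat.factorial k) := by
  intro k
  induction k with
  | zero => intro t; simp [Jf]
  | succ k ih =>
    intro t
    rw [List.replicate_succ]
    show (∫ s in (0:ℝ)..t, Jf (rho u) (List.replicate k 0) s * rho u 0 s) = _
    have heq : (fun s => Jf (rho u) (List.replicate k 0) s * rho u 0 s)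
        = fun s : ℝ => s ^ k / (Nat.factorial k : ℝ) := by
      funext s
      rw [ih s]
      simp [rho]
    rw [heq]
    rw [intervalIntegral.integral_div, integral_pow]
    rw [Nat.factorial_succ]
    push_cast
    have hk : ((Nat.factorial k : ℝ)) ≠ 0 := by
      exact_mod_cast Nat.factorial_ne_zero k
    field_simp
    simp

theorem Jf_mw (u : ℝ → Fin m → ℝ) (j : Fin m) (k : ℕ) (t : ℝ) :
    Jf (rho u) (mw j k) t = ∫ s in (0:ℝ)..t, (s ^ k / (Nat.factorial k)) * u s j := by
  show (∫ s in (0:ℝ)..t, Jf (rho u) (List.replicate k 0) s * rho u j.succ s) = _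
  congr 1
  funext s
  rw [Jf_replicate u k s]
  simp [rho]


/-! ### The `L^p` part -/

theorem abs_coord_le {m : ℕ} (x : EuclideanSpace ℝ (Fin m)) (j : Fin m) : |x j| ≤ ‖x‖ := by
  rw [EuclideanSpace.norm_eq]
  have h1 : |x j| = Real.sqrt (|x j| ^ 2) := by
    rw [Real.sqrt_sq_eq_abs, abs_abs]
  rw [h1]
  apply Real.sqrt_le_sqrt
  have h2 : ‖x j‖ ^ 2 = |x j| ^ 2 := by rw [Real.norm_eq_abs]
  rw [← h2]
  exact Finset.single_le_sum (f := fun i => ‖x i‖ ^ 2) (fun i _ => by positivity)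
    (Finset.mem_univ j)

variable (q : ℝ) (T : ℝ)

/-- The ambient `L^q` space. -/
abbrev Xsp (m : ℕ) : Type :=
  Lp (EuclideanSpace ℝ (Fin m)) (ENNReal.ofReal q) (volume.restrict (Set.Icc (0:ℝ) T))

variable {q T}

theorem finiteμ : IsFiniteMeasure (volume.restrict (Set.Icc (0:ℝ) T)) :=
  ⟨by rw [Measure.restrict_apply_univ]; exact measure_Icc_lt_top⟩

theorem vec_integrable [Fact (1 ≤ ENNReal.ofReal q)] (hq : 1 ≤ q) (hT : 0 < T)
    (u : Xsp q T m) : Integrable (⇑u) (volume.restrict (Set.Icc (0:ℝ) T)) := by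
  haveI := finiteμ (T := T)
  exact memLp_one_iff_integrable.mp ((Lp.memLp u).mono_exponent Fact.out)

theorem coord_integrable [Fact (1 ≤ ENNReal.ofReal q)] (hq : 1 ≤ q) (hT : 0 < T)
    (u : Xsp q T m) (j : Fin m) :
    IntegrableOn (fun s => (⇑u) s j) (Set.Icc (0:ℝ) T) volume := by
  have h4 := (EuclideanSpace.proj (𝕜 := ℝ) j).integrable_comp (vec_integrable hq hT u)
  exact h4

/-- The moment functionals. -/
noncomputable def Mf (j : Fin m) (k : ℕ) (u : Xsp q T m) : ℝ :=
  ∫ s in (0:ℝ)..T, (s ^ k / (Nat.factorial k : ℝ)) * ((⇑u) s j)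

theorem psi_contOn (k : ℕ) :
    ContinuousOn (fun s : ℝ => s ^ k / (Nat.factorial k : ℝ)) (Set.Icc 0 T) :=
  ((continuous_pow k).div_const _).continuousOn

theorem psi_mul_intInt [Fact (1 ≤ ENNReal.ofReal q)] (hq : 1 ≤ q) (hT : 0 < T)
    (u : Xsp q T m) (j : Fin m) (k : ℕ) :
    IntervalIntegrable (fun s => (s ^ k / (Nat.factorial k : ℝ)) * ((⇑u) s j)) volume 0 T := by
  refine MeasureTheory.IntegrableOn.intervalIntegrable ?_
  rw [Set.uIcc_of_le hT.le]
  exact IntegrableOn.continuousOn_mul (psi_contOn k) (coord_integrable hq hT u j) isCompact_Icc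

theorem Mf_cont [Fact (1 ≤ ENNReal.ofReal q)] (hq : 1 ≤ q) (hT : 0 < T) (j : Fin m) (k : ℕ) :
    Continuous (fun u : Xsp q T m => Mf j k u) := by
  haveI := finiteμ (T := T)
  have hqr : (ENNReal.ofReal q).toReal = q := ENNReal.toReal_ofReal (by linarith)
  set μT := volume.restrict (Set.Icc (0:ℝ) T) with hμT
  set Dr : ℝ := (μT Set.univ ^ (1 - 1 / q)).toReal with hDr
  have hDr0 : 0 ≤ Dr := ENNReal.toReal_nonneg
  set c : ℝ := T ^ k / (Nat.factorial k : ℝ) with hc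
  have hc0 : 0 ≤ c := by
    rw [hc]; positivity
  rw [Metric.continuous_iff]
  intro u₀ ε hε
  refine ⟨ε / (c * Dr + 1), by positivity, fun u hu => ?_⟩
  have hbound : dist (Mf j k u) (Mf j k u₀) ≤ c * Dr * dist u u₀ := by
    set h : ℝ → EuclideanSpace ℝ (Fin m) := ⇑u - ⇑u₀ with hh
    have hhint : Integrable h μT := (vec_integrable hq hT u).sub (vec_integrable hq hT u₀)
    have hdiff : Mf j k u - Mf j k u₀
        = ∫ s in (0:ℝ)..T, ((s ^ k / (Nat.factorial k : ℝ)) * ((⇑u) s j)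
            - (s ^ k / (Nat.factorial k : ℝ)) * ((⇑u₀) s j)) := by
      rw [intervalIntegral.integral_sub (psi_mul_intInt hq hT u j k)
        (psi_mul_intInt hq hT u₀ j k)]
      rfl
    have hae : ∀ᵐ t ∂volume.restrict (Set.uIoc (0:ℝ) T),
        ‖(t ^ k / (Nat.factorial k : ℝ)) * ((⇑u) t j)
          - (t ^ k / (Nat.factorial k : ℝ)) * ((⇑u₀) t j)‖ ≤ c * ‖h t‖ := by
      refine (MeasureTheory.ae_restrict_mem measurableSet_uIoc).mono fun t ht' => ?_
      rw [Set.uIoc_of_le hT.le] at ht'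
      have e1 : (t ^ k / (Nat.factorial k : ℝ)) * ((⇑u) t j)
          - (t ^ k / (Nat.factorial k : ℝ)) * ((⇑u₀) t j)
          = (t ^ k / (Nat.factorial k : ℝ)) * ((⇑u) t j - (⇑u₀) t j) := by ring
      rw [e1, Real.norm_eq_abs, abs_mul]
      have h2 : |t ^ k / (Nat.factorial k : ℝ)| ≤ c := by
        rw [abs_div, abs_of_nonneg (pow_nonneg ht'.1.le k),
          abs_of_nonneg (by positivity : (0:ℝ) ≤ (Nat.factorial k : ℝ)), hc]
        apply div_le_div_of_nonneg_right ?_ (by positivity)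
        exact pow_le_pow_left₀ ht'.1.le ht'.2 k
      have h3 : |(⇑u) t j - (⇑u₀) t j| ≤ ‖h t‖ := by
        have : (⇑u) t j - (⇑u₀) t j = (h t) j := by rw [hh]; simp [Pi.sub_apply]
        rw [this]
        exact abs_coord_le (h t) j
      exact mul_le_mul h2 h3 (abs_nonneg _) hc0
    have hbi : IntervalIntegrable (fun t => c * ‖h t‖) volume 0 T := by
      refine MeasureTheory.IntegrableOn.intervalIntegrable ?_
      rw [Set.uIcc_of_le hT.le]
      exact (hhint.norm).const_mul c
    have h4 := intervalIntegral.norm_integral_le_abs_of_norm_le hae hbi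
    have h5 : (∫ t in (0:ℝ)..T, c * ‖h t‖) = c * ∫ t in (0:ℝ)..T, ‖h t‖ :=
      intervalIntegral.integral_const_mul c _
    have hIoc : volume.restrict (Set.Ioc (0:ℝ) T) = μT :=
      MeasureTheory.Measure.restrict_congr_set MeasureTheory.Ioc_ae_eq_Icc
    have h6 : (∫ t in (0:ℝ)..T, ‖h t‖) = ∫ t, ‖h t‖ ∂μT := by
      rw [intervalIntegral.integral_of_le hT.le]
      rw [show ∫ t in Set.Ioc (0:ℝ) T, ‖h t‖ = ∫ t, ‖h t‖ ∂(volume.restrict (Set.Ioc (0:ℝ) T))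
        from rfl, hIoc]
    have h7 : ∫ t, ‖h t‖ ∂μT = (eLpNorm h 1 μT).toReal := by
      rw [MeasureTheory.integral_norm_eq_lintegral_enorm hhint.aestronglyMeasurable,
        MeasureTheory.eLpNorm_one_eq_lintegral_enorm]
    have h8 : eLpNorm h 1 μT ≤ eLpNorm h (ENNReal.ofReal q) μT * μT Set.univ ^ (1 - 1 / q) := by
      have h8' := MeasureTheory.eLpNorm_le_eLpNorm_mul_rpow_measure_univ
        (p := 1) (q := ENNReal.ofReal q) Fact.out hhint.aestronglyMeasurable
      simpa [hqr] using h8'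
    have hcongr : eLpNorm h (ENNReal.ofReal q) μT = eLpNorm (⇑(u - u₀)) (ENNReal.ofReal q) μT :=
      (MeasureTheory.eLpNorm_congr_ae (Lp.coeFn_sub u u₀)).symm
    have hfin : eLpNorm h (ENNReal.ofReal q) μT * μT Set.univ ^ (1 - 1 / q) ≠ ⊤ := by
      apply ENNReal.mul_ne_top
      · rw [hcongr]; exact (Lp.eLpNorm_lt_top (u - u₀)).ne
      · exact (ENNReal.rpow_lt_top_of_nonneg
          (by
            have : 1 / q ≤ 1 := by
              rw [div_le_one (by linarith)]; linarith
            linarith)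
          (measure_ne_top _ _)).ne
    have h9 : (eLpNorm h 1 μT).toReal
        ≤ (eLpNorm h (ENNReal.ofReal q) μT).toReal * Dr := by
      have := ENNReal.toReal_mono hfin h8
      rwa [ENNReal.toReal_mul] at this
    have h10 : (eLpNorm h (ENNReal.ofReal q) μT).toReal = dist u u₀ := by
      rw [hcongr, Lp.dist_def]
      congr 1
      apply MeasureTheory.eLpNorm_congr_ae
      exact (Lp.coeFn_sub u u₀).trans (by rfl)
    rw [Real.dist_eq, hdiff]
    calc |∫ s in (0:ℝ)..T, ((s ^ k / (Nat.factorial k : ℝ)) * ((⇑u) s j)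
            - (s ^ k / (Nat.factorial k : ℝ)) * ((⇑u₀) s j))|
        ≤ |∫ t in (0:ℝ)..T, c * ‖h t‖| := by
          rw [← Real.norm_eq_abs (∫ s in (0:ℝ)..T, _)]
          exact h4
      _ = c * ∫ t, ‖h t‖ ∂μT := by
          rw [abs_of_nonneg, h5, h6]
          exact intervalIntegral.integral_nonneg hT.le
            (fun x _ => mul_nonneg hc0 (norm_nonneg _))
      _ = c * (eLpNorm h 1 μT).toReal := by rw [h7]
      _ ≤ c * ((eLpNorm h (ENNReal.ofReal q) μT).toReal * Dr) :=
          mul_le_mul_of_nonneg_left h9 hc0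
      _ = c * Dr * dist u u₀ := by rw [h10]; ring
  calc dist (Mf j k u) (Mf j k u₀) ≤ c * Dr * dist u u₀ := hbound
    _ ≤ c * Dr * (ε / (c * Dr + 1)) :=
        mul_le_mul_of_nonneg_left hu.le (by positivity)
    _ < ε := by
        rw [mul_div_assoc']
        rw [div_lt_iff₀ (by positivity)]
        nlinarith [mul_nonneg hc0 hDr0]

theorem Mf_inj [Fact (1 ≤ ENNReal.ofReal q)] (hq : 1 ≤ q) (hT : 0 < T) {u v : Xsp q T m}
    (h : ∀ (j : Fin m) (k : ℕ), Mf j k u = Mf j k v) : u = v := by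
  haveI := finiteμ (T := T)
  set μT := volume.restrict (Set.Icc (0:ℝ) T) with hμT
  have hIoc : volume.restrict (Set.Ioc (0:ℝ) T) = μT :=
    MeasureTheory.Measure.restrict_congr_set MeasureTheory.Ioc_ae_eq_Icc
  have hcoord : ∀ j : Fin m, ∀ᵐ s ∂μT, (⇑u) s j - (⇑v) s j = 0 := by
    intro j
    set f : ℝ → ℝ := fun s => (⇑u) s j - (⇑v) s j with hfdef
    have hfint : Integrable f μT :=
      (coord_integrable hq hT u j).sub (coord_integrable hq hT v j)
    have hmom : ∀ n : ℕ, ∫ s, (s ^ n / (Nat.factorial n : ℝ)) * f s ∂μT = 0 := by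
      intro n
      have h3 : (∫ s in (0:ℝ)..T, ((s ^ n / (Nat.factorial n : ℝ)) * ((⇑u) s j)
          - (s ^ n / (Nat.factorial n : ℝ)) * ((⇑v) s j))) = 0 := by
        rw [intervalIntegral.integral_sub (psi_mul_intInt hq hT u j n)
          (psi_mul_intInt hq hT v j n)]
        have := h j n
        rw [Mf, Mf] at this
        rw [this]
        ring
      rw [show (∫ s, (s ^ n / (Nat.factorial n : ℝ)) * f s ∂μT)
          = ∫ s in (0:ℝ)..T, ((s ^ n / (Nat.factorial n : ℝ)) * ((⇑u) s j)
            - (s ^ n / (Nat.factorial n : ℝ)) * ((⇑v) s j)) from ?_, h3]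
      rw [intervalIntegral.integral_of_le hT.le]
      rw [show ∫ s in Set.Ioc (0:ℝ) T, ((s ^ n / (Nat.factorial n : ℝ)) * ((⇑u) s j)
            - (s ^ n / (Nat.factorial n : ℝ)) * ((⇑v) s j))
          = ∫ s, ((s ^ n / (Nat.factorial n : ℝ)) * ((⇑u) s j)
            - (s ^ n / (Nat.factorial n : ℝ)) * ((⇑v) s j))
              ∂(volume.restrict (Set.Ioc (0:ℝ) T)) from rfl, hIoc]
      congr 1
      funext s
      rw [hfdef]
      ring
    have hmon : ∀ n : ℕ, ∫ s, s ^ n * f s ∂μT = 0 := by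
      intro n
      have hne : ((Nat.factorial n : ℝ)) ≠ 0 := by positivity
      have e1 : (fun s : ℝ => s ^ n * f s)
          = fun s => (Nat.factorial n : ℝ) * ((s ^ n / (Nat.factorial n : ℝ)) * f s) := by
        funext s; field_simp
      rw [e1, MeasureTheory.integral_const_mul, hmom n, mul_zero]
    have hbddmul : ∀ (φ : ℝ → ℝ), Continuous φ → Integrable (fun s => φ s * f s) μT := by
      intro φ hφ
      obtain ⟨Cb, hCb⟩ := isCompact_Icc.exists_bound_of_continuousOn
        (hφ.continuousOn : ContinuousOn φ (Set.Icc (0:ℝ) T))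
      refine MeasureTheory.Integrable.bdd_mul (c := Cb) hfint hφ.aestronglyMeasurable ?_
      refine (MeasureTheory.ae_restrict_mem measurableSet_Icc).mono fun s hs => ?_
      exact hCb s hs
    have hpoly : ∀ P : Polynomial ℝ, ∫ s, Polynomial.eval s P * f s ∂μT = 0 := by
      intro P
      have e1 : (fun s => Polynomial.eval s P * f s)
          = fun s => ∑ i ∈ Finset.range (P.natDegree + 1), P.coeff i * (s ^ i * f s) := by
        funext s
        rw [Polynomial.eval_eq_sum_range, Finset.sum_mul]
        refine Finset.sum_congr rfl fun i _ => by ring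
      rw [e1, MeasureTheory.integral_finset_sum]
      · refine Finset.sum_eq_zero fun i _ => ?_
        rw [MeasureTheory.integral_const_mul, hmon i, mul_zero]
      · intro i _
        refine MeasureTheory.Integrable.const_mul ?_ _
        have : Continuous (fun s : ℝ => s ^ i) := continuous_pow i
        exact (hbddmul _ this)
    have hcont : ∀ φ : ℝ → ℝ, Continuous φ → ∫ s, φ s * f s ∂μT = 0 := by
      intro φ hφ
      set I := ∫ s, φ s * f s ∂μT with hI
      set C0 := ∫ s, |f s| ∂μT with hC0
      have hC00 : 0 ≤ C0 := MeasureTheory.integral_nonneg fun s => abs_nonneg _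
      have key : ∀ ε > 0, |I| ≤ ε * C0 := by
        intro ε hε
        set φC : C(Set.Icc (0:ℝ) T, ℝ) :=
          ⟨fun x => φ x, hφ.comp continuous_subtype_val⟩ with hφC
        have hcl : φC ∈ closure ((polynomialFunctions (Set.Icc (0:ℝ) T) : Set _)) := by
          have h1 : φC ∈ (polynomialFunctions (Set.Icc (0:ℝ) T)).topologicalClosure := by
            rw [polynomialFunctions_closure_eq_top]; trivial
          rwa [← SetLike.mem_coe, Subalgebra.topologicalClosure_coe] at h1
        obtain ⟨p', hp'mem, hp'dist⟩ := Metric.mem_closure_iff.mp hcl ε hε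
        rw [polynomialFunctions_coe] at hp'mem
        obtain ⟨P, rfl⟩ := hp'mem
        have hPf : Integrable (fun s => Polynomial.eval s P * f s) μT :=
          hbddmul _ (P.continuous_aeval)
        have hφf : Integrable (fun s => φ s * f s) μT := hbddmul _ hφ
        have e2 : I = ∫ s, (φ s - Polynomial.eval s P) * f s ∂μT := by
          rw [hI, ← sub_zero (∫ s, φ s * f s ∂μT), ← hpoly P,
            ← MeasureTheory.integral_sub hφf hPf]
          congr 1
          funext s
          ring
        rw [e2]
        have h6 := MeasureTheory.norm_integral_le_integral_norm
          (f := fun s => (φ s - Polynomial.eval s P) * f s) (μ := μT)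
        rw [Real.norm_eq_abs] at h6
        refine h6.trans ?_
        have hsubint : Integrable (fun s => (φ s - Polynomial.eval s P) * f s) μT :=
          hbddmul _ (hφ.sub (Polynomial.continuous P))
        have h7 : ∫ s, ‖(φ s - Polynomial.eval s P) * f s‖ ∂μT ≤ ∫ s, ε * |f s| ∂μT := by
          refine MeasureTheory.integral_mono_ae hsubint.norm
            ((hfint.abs).const_mul ε) ?_
          · refine (MeasureTheory.ae_restrict_mem measurableSet_Icc).mono fun s hs => ?_
            show ‖(φ s - Polynomial.eval s P) * f s‖ ≤ ε * |f s|
            rw [Real.norm_eq_abs, abs_mul]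
            refine mul_le_mul_of_nonneg_right ?_ (abs_nonneg _)
            have h8 := ContinuousMap.dist_apply_le_dist (f := φC)
              (g := Polynomial.toContinuousMapOnAlgHom (Set.Icc (0:ℝ) T) P) ⟨s, hs⟩
            rw [Real.dist_eq] at h8
            have h9 : φC ⟨s, hs⟩ = φ s := rfl
            have h10 : (Polynomial.toContinuousMapOnAlgHom (Set.Icc (0:ℝ) T) P) ⟨s, hs⟩
                = Polynomial.eval s P := by
              simp [Polynomial.toContinuousMapOnAlgHom, Polynomial.toContinuousMapOn,
                Polynomial.toContinuousMap]
            rw [h9, h10] at h8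
            exact h8.trans hp'dist.le
        refine h7.trans ?_
        rw [MeasureTheory.integral_const_mul, hC0]
      have habs : |I| ≤ 0 := by
        by_contra h'
        push_neg at h'
        have hk := key (|I| / (2 * (C0 + 1))) (by positivity)
        rw [div_mul_eq_mul_div, le_div_iff₀ (by linarith : (0:ℝ) < 2 * (C0 + 1))] at hk
        nlinarith
      exact abs_eq_zero.mp (le_antisymm habs (abs_nonneg _))
    have hae0 : ∀ᵐ s ∂μT, f s = 0 := by
      apply ae_eq_zero_of_integral_contDiff_smul_eq_zero
        (hfint.locallyIntegrable)
      intro ψ hψ _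
      have := hcont ψ hψ.continuous
      simpa [smul_eq_mul] using this
    exact hae0
  have hall : ∀ᵐ s ∂μT, ∀ j : Fin m, (⇑u) s j - (⇑v) s j = 0 :=
    (MeasureTheory.ae_all_iff).mpr hcoord
  refine MeasureTheory.Lp.ext ?_
  refine hall.mono fun s hs => ?_
  ext j
  exact sub_eq_zero.mp (hs j)

/-! ### Signature functionals on `L^q` -/

/-- The value of the signature functional of the word `w`. -/
noncomputable def Phi (u : Xsp q T m) (w : List (Fin (m + 1))) : ℝ :=
  iterInt (hatU fun s i => (⇑u) s i) w T

/-- Evaluation of a formal linear combination of words. -/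
noncomputable def Ev (u : Xsp q T m) : (List (Fin (m + 1)) →₀ ℝ) →ₗ[ℝ] ℝ :=
  Finsupp.linearCombination ℝ (Phi u)

theorem Ev_eq_sum (u : Xsp q T m) (ℓ : List (Fin (m + 1)) →₀ ℝ) :
    Ev u ℓ = ∑ w ∈ ℓ.support, ℓ w * Phi u w := by
  rw [Ev, Finsupp.linearCombination_apply, Finsupp.sum]
  simp [smul_eq_mul]

theorem Phi_eq_Jf [Fact (1 ≤ ENNReal.ofReal q)] (hq : 1 ≤ q) (hT : 0 < T)
    (u : Xsp q T m) (w : List (Fin (m + 1))) :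
    Phi u w = Jf (rho fun s i => (⇑u) s i) w T :=
  iterInt_eq hT.le (fun j => coord_integrable hq hT u j) w T ⟨hT.le, le_rfl⟩

theorem Phi_mul [Fact (1 ≤ ENNReal.ofReal q)] (hq : 1 ≤ q) (hT : 0 < T)
    (u : Xsp q T m) (w v : List (Fin (m + 1))) :
    Phi u w * Phi u v = ((shuf w v).map (Phi u)).sum := by
  rw [Phi_eq_Jf hq hT u w, Phi_eq_Jf hq hT u v,
    Jf_shuffle hT.le (rho_integrable hT.le fun j => coord_integrable hq hT u j) w v T
      ⟨hT.le, le_rfl⟩]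
  congr 1
  refine List.map_congr_left fun σ _ => ?_
  exact (Phi_eq_Jf hq hT u σ).symm

theorem Phi_mw [Fact (1 ≤ ENNReal.ofReal q)] (hq : 1 ≤ q) (hT : 0 < T)
    (u : Xsp q T m) (j : Fin m) (k : ℕ) :
    Phi u (mw j k) = Mf j k u := by
  rw [Phi_eq_Jf hq hT u (mw j k), Jf_mw]
  rfl

theorem Ev_single (u : Xsp q T m) (w : List (Fin (m + 1))) (c : ℝ) :
    Ev u (Finsupp.single w c) = c * Phi u w := by
  rw [Ev, Finsupp.linearCombination_single, smul_eq_mul]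

theorem Ev_shuffle [Fact (1 ≤ ENNReal.ofReal q)] (hq : 1 ≤ q) (hT : 0 < T)
    (u : Xsp q T m) (w v : List (Fin (m + 1))) :
    Ev u (((shuf w v).map fun σ => Finsupp.single σ (1:ℝ)).sum) = Phi u w * Phi u v := by
  rw [map_list_sum, List.map_map, Phi_mul hq hT u w v]
  congr 1
  refine List.map_congr_left fun σ _ => ?_
  show Ev u (Finsupp.single σ (1:ℝ)) = Phi u σ
  rw [Ev_single, one_mul]

theorem Ev_mul [Fact (1 ≤ ENNReal.ofReal q)] (hq : 1 ≤ q) (hT : 0 < T)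
    (u : Xsp q T m) (ℓ₁ ℓ₂ : List (Fin (m + 1)) →₀ ℝ) :
    Ev u (ℓ₁.sum fun w c₁ => ℓ₂.sum fun v c₂ =>
        (c₁ * c₂) • ((shuf w v).map fun σ => Finsupp.single σ (1:ℝ)).sum)
      = Ev u ℓ₁ * Ev u ℓ₂ := by
  rw [Finsupp.sum, map_sum, Ev_eq_sum u ℓ₁, Ev_eq_sum u ℓ₂, Finset.sum_mul_sum]
  refine Finset.sum_congr rfl fun w _ => ?_
  rw [Finsupp.sum, map_sum]
  refine Finset.sum_congr rfl fun v _ => ?_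
  rw [LinearMap.map_smul, Ev_shuffle hq hT u w v, smul_eq_mul]
  ring

end Stmt13

set_option maxHeartbeats 1000000 in
set_option synthInstance.maxHeartbeats 400000 in
/-- Universal approximation by signatures: for `q ≥ 1`, a compact set
`K ⊂ L^q([0,T]; ℝ^m)` and a continuous functional `g : L^q([0,T]; ℝ^m) → ℝ`, for every
`ε > 0` there is a word `ℓ` (finitely supported linear functional on the signature)
with `sup_{u ∈ K} |g(u) − ⟨ℓ, S_{0,T}(Û)⟩| < ε`, where `Û(t) = (t, ∫_0^t u^⊤ ds)^⊤`. -/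
theorem stmt_13 {m : ℕ} (q T : ℝ) (hq : 1 ≤ q) (hT : 0 < T)
    [Fact (1 ≤ ENNReal.ofReal q)]
    (K : Set (Lp (EuclideanSpace ℝ (Fin m)) (ENNReal.ofReal q)
      (volume.restrict (Set.Icc (0:ℝ) T))))
    (hK : IsCompact K)
    (g : Lp (EuclideanSpace ℝ (Fin m)) (ENNReal.ofReal q)
      (volume.restrict (Set.Icc (0:ℝ) T)) → ℝ)
    (hg : Continuous g) (ε : ℝ) (hε : 0 < ε) :
    ∃ ℓ : List (Fin (m + 1)) →₀ ℝ, ∀ u ∈ K,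
      |g u - ∑ w ∈ ℓ.support, ℓ w * iterInt (hatU (fun s i => (⇑u) s i)) w T| < ε := by
  classical
  haveI : CompactSpace K := isCompact_iff_compactSpace.mp hK
  set Mc : Fin m × ℕ → C(K, ℝ) := fun jk =>
    ⟨fun y => Stmt13.Mf jk.1 jk.2 (y : Stmt13.Xsp q T m),
      (Stmt13.Mf_cont hq hT jk.1 jk.2).comp continuous_subtype_val⟩ with hMc
  set A : Subalgebra ℝ C(K, ℝ) := Algebra.adjoin ℝ (Set.range Mc) with hA
  have hsep : A.SeparatesPoints := by
    rintro x y hxy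
    have hne : (x : Stmt13.Xsp q T m) ≠ y := fun h' => hxy (Subtype.ext h')
    have h2 : ¬ ∀ (j : Fin m) (k : ℕ),
        Stmt13.Mf j k (x : Stmt13.Xsp q T m) = Stmt13.Mf j k (y : Stmt13.Xsp q T m) :=
      fun hall => hne (Stmt13.Mf_inj hq hT hall)
    push_neg at h2
    obtain ⟨j, k, hjk⟩ := h2
    exact ⟨_, ⟨Mc (j, k), Algebra.subset_adjoin ⟨(j, k), rfl⟩, rfl⟩, hjk⟩
  have htop := ContinuousMap.subalgebra_topologicalClosure_eq_top_of_separatesPoints A hsep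
  set gC : C(K, ℝ) := ⟨fun y => g y, hg.comp continuous_subtype_val⟩ with hgC
  have hclos : gC ∈ closure (A : Set C(K, ℝ)) := by
    have h1 : gC ∈ A.topologicalClosure := by rw [htop]; trivial
    rwa [← SetLike.mem_coe, Subalgebra.topologicalClosure_coe] at h1
  obtain ⟨p, hpA, hdist⟩ := Metric.mem_closure_iff.mp hclos ε hε
  have hrep : ∀ f ∈ A, ∃ ℓ : List (Fin (m + 1)) →₀ ℝ,
      ∀ y : K, f y = Stmt13.Ev (y : Stmt13.Xsp q T m) ℓ := by
    intro f hf
    rw [hA] at hf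
    induction hf using Algebra.adjoin_induction with
    | mem x hx =>
      obtain ⟨⟨j, k⟩, rfl⟩ := hx
      refine ⟨Finsupp.single (Stmt13.mw j k) 1, fun y => ?_⟩
      rw [Stmt13.Ev_single, one_mul, Stmt13.Phi_mw hq hT]
      rfl
    | algebraMap r =>
      refine ⟨Finsupp.single [] r, fun y => ?_⟩
      rw [Stmt13.Ev_single]
      have h1 : Stmt13.Phi (y : Stmt13.Xsp q T m) ([] : List (Fin (m + 1))) = 1 := rfl
      rw [h1, mul_one]
      rfl
    | add x y hx hy ihx ihy =>
      obtain ⟨ℓ₁, h₁⟩ := ihx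
      obtain ⟨ℓ₂, h₂⟩ := ihy
      refine ⟨ℓ₁ + ℓ₂, fun z => ?_⟩
      rw [map_add, ← h₁ z, ← h₂ z]
      rfl
    | mul x y hx hy ihx ihy =>
      obtain ⟨ℓ₁, h₁⟩ := ihx
      obtain ⟨ℓ₂, h₂⟩ := ihy
      refine ⟨ℓ₁.sum fun w c₁ => ℓ₂.sum fun v c₂ =>
        (c₁ * c₂) • ((Stmt13.shuf w v).map fun σ => Finsupp.single σ (1:ℝ)).sum,
        fun z => ?_⟩
      rw [Stmt13.Ev_mul hq hT, ← h₁ z, ← h₂ z]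
      rfl
  obtain ⟨ℓ, hℓ⟩ := hrep p hpA
  refine ⟨ℓ, fun u hu => ?_⟩
  have h1 := hℓ ⟨u, hu⟩
  have h2 : (∑ w ∈ ℓ.support, ℓ w * iterInt (hatU (fun s i => (⇑u) s i)) w T)
      = Stmt13.Ev (u : Stmt13.Xsp q T m) ℓ := by
    rw [Stmt13.Ev_eq_sum]
    rfl
  rw [h2, ← h1]
  have h3 := ContinuousMap.dist_apply_le_dist (f := gC) (g := p) ⟨u, hu⟩
  rw [Real.dist_eq] at h3
  have h4 : gC ⟨u, hu⟩ = g u := rfl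
  rw [h4] at h3
  exact lt_of_le_of_lt h3 hdist
end

section
/- The set of stopped controls H = { t ↦ (1, u(t)^⊤)^⊤ · 1_{[0,s]}(t) : s ∈ [0,T], u ∈ K } is relatively compact in L^1([0,T]; R^{m+1}) whenever K is a compact subset of L^2([0,T]; R^m). -/
open MeasureTheory

open MeasureTheory Set
open scoped ENNReal NNReal
set_option maxHeartbeats 1000000
set_option synthInstance.maxHeartbeats 400000

noncomputable section

variable {m : ℕ} {T : ℝ}

abbrev muT (T : ℝ) : Measure ℝ := volume.restrict (Set.Icc (0:ℝ) T)

instance : IsFiniteMeasure (muT T) := by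
  constructor
  rw [Measure.restrict_apply_univ]
  exact measure_Icc_lt_top

lemma euclid_cons_norm_le (a : ℝ) (x : EuclideanSpace ℝ (Fin m)) :
    ‖(WithLp.toLp 2 (Fin.cons a (fun i => x i) : Fin (m+1) → ℝ))‖ ≤ |a| + ‖x‖ := by
  rw [EuclideanSpace.norm_eq, EuclideanSpace.norm_eq]
  have hsum : ∑ i : Fin (m+1), ‖(Fin.cons a (fun i => x i) : Fin (m+1) → ℝ) i‖ ^ 2
      = ‖a‖ ^ 2 + ∑ i : Fin m, ‖x i‖ ^ 2 := by
    rw [Fin.sum_univ_succ]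
    simp [Fin.cons_zero, Fin.cons_succ]
  rw [hsum]
  have hS : (0:ℝ) ≤ ∑ i : Fin m, ‖x i‖ ^ 2 := Finset.sum_nonneg fun i _ => sq_nonneg _
  have h1 : ‖a‖ ^ 2 + ∑ i : Fin m, ‖x i‖ ^ 2
      ≤ (|a| + Real.sqrt (∑ i : Fin m, ‖x i‖ ^ 2)) ^ 2 := by
    have := Real.sq_sqrt hS
    rw [Real.norm_eq_abs]
    nlinarith [Real.sqrt_nonneg (∑ i : Fin m, ‖x i‖ ^ 2), abs_nonneg a, Real.sq_sqrt hS]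
  calc Real.sqrt (‖a‖ ^ 2 + ∑ i : Fin m, ‖x i‖ ^ 2)
      ≤ Real.sqrt ((|a| + Real.sqrt (∑ i : Fin m, ‖x i‖ ^ 2)) ^ 2) := Real.sqrt_le_sqrt h1
    _ = |a| + Real.sqrt (∑ i : Fin m, ‖x i‖ ^ 2) := by
        rw [Real.sqrt_sq (by positivity)]

lemma euclid_cons_zero_norm (x : EuclideanSpace ℝ (Fin m)) :
    ‖(WithLp.toLp 2 (Fin.cons 0 (fun i => x i) : Fin (m+1) → ℝ))‖ = ‖x‖ := by
  rw [EuclideanSpace.norm_eq, EuclideanSpace.norm_eq]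
  congr 1
  rw [Fin.sum_univ_succ]
  simp [Fin.cons_zero, Fin.cons_succ]

def gm (u : Lp (EuclideanSpace ℝ (Fin m)) 2 (muT T)) : ℝ → EuclideanSpace ℝ (Fin (m+1)) :=
  fun t => WithLp.toLp 2 (Fin.cons 1 (fun i => (u t) i) : Fin (m+1) → ℝ)

lemma cont_consmap :
    Continuous (fun v : EuclideanSpace ℝ (Fin m) =>
      WithLp.toLp 2 (Fin.cons 1 (fun i => v i) : Fin (m+1) → ℝ)) := by
  have h : Continuous (fun v : EuclideanSpace ℝ (Fin m) =>
      (Fin.cons 1 (fun i => v i) : ∀ _ : Fin (m+1), ℝ)) := by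
    apply continuous_pi
    intro j
    refine Fin.cases ?_ ?_ j
    · simpa [Fin.cons_zero] using continuous_const
    · intro i
      simpa [Fin.cons_succ] using (EuclideanSpace.proj (𝕜 := ℝ) i).continuous
  exact (PiLp.continuousLinearEquiv 2 ℝ (fun _ : Fin (m+1) => ℝ)).symm.continuous.comp h

lemma memLp_gm (u : Lp (EuclideanSpace ℝ (Fin m)) 2 (muT T)) : MemLp (gm u) 1 (muT T) := by
  have hu1 : MemLp (⇑u) 1 (muT T) := (Lp.memLp u).mono_exponent (by norm_num)
  have hmeas : AEStronglyMeasurable (gm u) (muT T) :=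
    cont_consmap.comp_aestronglyMeasurable (Lp.aestronglyMeasurable u)
  have hg : MemLp (fun t => 1 + ‖u t‖) 1 (muT T) := (memLp_const (1:ℝ)).add hu1.norm
  refine MemLp.of_le hg hmeas (Filter.Eventually.of_forall fun t => ?_)
  have h1 : ‖gm u t‖ ≤ 1 + ‖u t‖ := by
    simpa [gm] using euclid_cons_norm_le 1 (u t)
  have h2 : (0:ℝ) ≤ 1 + ‖u t‖ := by positivity
  calc ‖gm u t‖ ≤ 1 + ‖u t‖ := h1
    _ ≤ ‖1 + ‖u t‖‖ := le_abs_self _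

def Phi (T : ℝ) (s : ℝ) (u : Lp (EuclideanSpace ℝ (Fin m)) 2 (muT T)) :
    Lp (EuclideanSpace ℝ (Fin (m+1))) 1 (muT T) :=
  MemLp.toLp ((Set.Icc (0:ℝ) s).indicator (gm u)) ((memLp_gm u).indicator measurableSet_Icc)

lemma gm_sub_norm (u u' : Lp (EuclideanSpace ℝ (Fin m)) 2 (muT T)) (t : ℝ) :
    ‖gm u t - gm u' t‖ = ‖u t - u' t‖ := by
  have h : gm u t - gm u' t
      = (WithLp.toLp 2 (Fin.cons 0 (fun i => (u t - u' t) i) : Fin (m+1) → ℝ)) := by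
    ext j
    refine Fin.cases ?_ ?_ j
    · simp [gm, Fin.cons_zero]
    · intro i
      simp [gm, Fin.cons_succ]
  rw [h, euclid_cons_zero_norm]

lemma Phi_lip (s : ℝ) (u u' : Lp (EuclideanSpace ℝ (Fin m)) 2 (muT T)) :
    ‖Phi T s u - Phi T s u'‖ ≤ (((muT T) Set.univ) ^ ((1:ℝ)/2)).toReal * ‖u - u'‖ := by
  have he : eLpNorm (⇑(Phi T s u - Phi T s u')) 1 (muT T)
      = eLpNorm ((Set.Icc (0:ℝ) s).indicator (gm u) - (Set.Icc (0:ℝ) s).indicator (gm u')) 1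
        (muT T) := by
    apply eLpNorm_congr_ae
    filter_upwards [Lp.coeFn_sub (Phi T s u) (Phi T s u'),
      MemLp.coeFn_toLp (f := (Set.Icc (0:ℝ) s).indicator (gm u)) ((memLp_gm u).indicator (measurableSet_Icc (a := (0:ℝ)) (b := s))),
      MemLp.coeFn_toLp (f := (Set.Icc (0:ℝ) s).indicator (gm u')) ((memLp_gm u').indicator (measurableSet_Icc (a := (0:ℝ)) (b := s)))]
      with t h1 h2 h3
    simp only [Phi, Pi.sub_apply] at h1 h2 h3 ⊢
    rw [h1, h2, h3]
  have hexp : (1 / (1:ℝ≥0∞).toReal - 1 / (2:ℝ≥0∞).toReal) = ((1:ℝ)/2) := by norm_num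
  have hb : eLpNorm (⇑(Phi T s u - Phi T s u')) 1 (muT T)
      ≤ eLpNorm (⇑u - ⇑u') 2 (muT T) * ((muT T) Set.univ) ^ ((1:ℝ)/2) := by
    rw [he]
    have hpt : ∀ t, ‖((Set.Icc (0:ℝ) s).indicator (gm u)
        - (Set.Icc (0:ℝ) s).indicator (gm u')) t‖ ≤ ‖(⇑u - ⇑u') t‖ := by
      intro t
      rw [Pi.sub_apply, Pi.sub_apply]
      by_cases ht : t ∈ Set.Icc (0:ℝ) s
      · rw [Set.indicator_of_mem ht, Set.indicator_of_mem ht, gm_sub_norm]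
      · rw [Set.indicator_of_notMem ht, Set.indicator_of_notMem ht]
        simp
    refine (eLpNorm_mono hpt).trans ?_
    rw [← hexp]
    exact eLpNorm_le_eLpNorm_mul_rpow_measure_univ one_le_two
      ((Lp.aestronglyMeasurable u).sub (Lp.aestronglyMeasurable u'))
  have hsub : eLpNorm (⇑u - ⇑u') 2 (muT T) = eLpNorm (⇑(u - u')) 2 (muT T) :=
    (eLpNorm_congr_ae (Lp.coeFn_sub u u')).symm
  have hfin : eLpNorm (⇑u - ⇑u') 2 (muT T) * ((muT T) Set.univ) ^ ((1:ℝ)/2) ≠ ⊤ := by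
    apply ENNReal.mul_ne_top
    · rw [hsub]; exact (Lp.memLp (u - u')).eLpNorm_lt_top.ne
    · exact (ENNReal.rpow_lt_top_of_nonneg (by norm_num) (measure_ne_top _ _)).ne
  calc ‖Phi T s u - Phi T s u'‖
      = (eLpNorm (⇑(Phi T s u - Phi T s u')) 1 (muT T)).toReal := Lp.norm_def _
    _ ≤ (eLpNorm (⇑u - ⇑u') 2 (muT T) * ((muT T) Set.univ) ^ ((1:ℝ)/2)).toReal :=
        ENNReal.toReal_mono hfin hb
    _ = (((muT T) Set.univ) ^ ((1:ℝ)/2)).toReal * ‖u - u'‖ := by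
        rw [ENNReal.toReal_mul, Lp.norm_def, hsub, mul_comm]

lemma Phi_cont_s (u : Lp (EuclideanSpace ℝ (Fin m)) 2 (muT T)) (s₀ : ℝ) :
    Filter.Tendsto (fun s => ‖Phi T s u - Phi T s₀ u‖) (nhds s₀) (nhds 0) := by
  have hbound : ∀ s : ℝ, eLpNorm (⇑(Phi T s u - Phi T s₀ u)) 1 (muT T)
      ≤ ∫⁻ t in Set.uIoc s₀ s, ‖gm u t‖₊ ∂(muT T) := by
    intro s
    have he : eLpNorm (⇑(Phi T s u - Phi T s₀ u)) 1 (muT T)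
        = eLpNorm ((Set.Icc (0:ℝ) s).indicator (gm u)
            - (Set.Icc (0:ℝ) s₀).indicator (gm u)) 1 (muT T) := by
      apply eLpNorm_congr_ae
      filter_upwards [Lp.coeFn_sub (Phi T s u) (Phi T s₀ u),
        MemLp.coeFn_toLp (f := (Set.Icc (0:ℝ) s).indicator (gm u)) ((memLp_gm u).indicator (measurableSet_Icc (a := (0:ℝ)) (b := s))),
        MemLp.coeFn_toLp (f := (Set.Icc (0:ℝ) s₀).indicator (gm u)) ((memLp_gm u).indicator (measurableSet_Icc (a := (0:ℝ)) (b := s₀)))]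
        with t h1 h2 h3
      simp only [Phi, Pi.sub_apply] at h1 h2 h3 ⊢
      rw [h1, h2, h3]
    rw [he, eLpNorm_indicator_sub_indicator]
    have hsub : (symmDiff (Set.Icc (0:ℝ) s) (Set.Icc (0:ℝ) s₀)) ⊆ Set.uIoc s₀ s := by
      intro t ht
      rw [Set.mem_symmDiff] at ht
      rw [Set.mem_uIoc]
      rcases ht with ⟨⟨h0, hts⟩, hnot⟩ | ⟨⟨h0, hts0⟩, hnot⟩
      · left
        constructor
        · by_contra hc
          exact hnot ⟨h0, le_of_not_gt hc⟩
        · exact hts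
      · right
        constructor
        · by_contra hc
          exact hnot ⟨h0, le_of_not_gt hc⟩
        · exact hts0
    have hpt : ∀ t, ‖((symmDiff (Set.Icc (0:ℝ) s) (Set.Icc (0:ℝ) s₀)).indicator (gm u)) t‖
        ≤ ‖((Set.uIoc s₀ s).indicator (gm u)) t‖ :=
      fun t => norm_indicator_le_of_subset hsub (gm u) t
    refine (eLpNorm_mono hpt).trans ?_
    rw [eLpNorm_indicator_eq_eLpNorm_restrict measurableSet_uIoc, eLpNorm_one_eq_lintegral_enorm,
      Measure.restrict_restrict measurableSet_uIoc]
    simp only [enorm_eq_nnnorm, le_refl]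
  rw [Metric.tendsto_nhds]
  intro ε hε
  have hfin : ∫⁻ t, ‖gm u t‖₊ ∂(muT T) ≠ ⊤ := by
    rw [show (∫⁻ t, (‖gm u t‖₊ : ℝ≥0∞) ∂(muT T)) = eLpNorm (gm u) 1 (muT T) from
      (by simp only [eLpNorm_one_eq_lintegral_enorm, enorm_eq_nnnorm])]
    exact (memLp_gm u).eLpNorm_lt_top.ne
  obtain ⟨δ, hδ0, hδ⟩ :=
    exists_pos_setLIntegral_lt_of_measure_lt (μ := muT T) hfin (ENNReal.ofReal_pos.mpr hε).ne'
  obtain ⟨r, hr0, hrδ⟩ : ∃ r : ℝ, 0 < r ∧ ENNReal.ofReal r < δ := by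
    rcases ENNReal.lt_iff_exists_real_btwn.mp hδ0 with ⟨r, _, h1, h2⟩
    exact ⟨r, ENNReal.ofReal_pos.mp h1, h2⟩
  filter_upwards [Metric.ball_mem_nhds s₀ hr0] with s hs
  have hμ : (muT T) (Set.uIoc s₀ s) < δ := by
    calc (muT T) (Set.uIoc s₀ s) ≤ volume (Set.uIoc s₀ s) :=
          Measure.restrict_apply_le _ _
      _ = ENNReal.ofReal (max s₀ s - min s₀ s) := by
          rw [Set.uIoc, Real.volume_Ioc]
      _ < ENNReal.ofReal r := by
          rw [max_sub_min_eq_abs]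
          exact (ENNReal.ofReal_lt_ofReal_iff hr0).mpr
            (by simpa [Real.dist_eq, abs_sub_comm] using hs)
      _ < δ := hrδ
  have hlt := hδ _ hμ
  rw [Real.dist_eq, sub_zero, abs_of_nonneg (norm_nonneg _)]
  calc ‖Phi T s u - Phi T s₀ u‖
      = (eLpNorm (⇑(Phi T s u - Phi T s₀ u)) 1 (muT T)).toReal := Lp.norm_def _
    _ < ε := ENNReal.toReal_lt_of_lt_ofReal (lt_of_le_of_lt (hbound s) hlt)

lemma Phi_continuous :
    Continuous (fun p : ℝ × Lp (EuclideanSpace ℝ (Fin m)) 2 (muT T) => Phi T p.1 p.2) := by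
  rw [continuous_iff_continuousAt]
  rintro ⟨s₀, u₀⟩
  rw [ContinuousAt, tendsto_iff_norm_sub_tendsto_zero]
  set C := (((muT T) Set.univ) ^ ((1:ℝ)/2)).toReal with hC
  have hub : ∀ p : ℝ × Lp (EuclideanSpace ℝ (Fin m)) 2 (muT T),
      ‖Phi T p.1 p.2 - Phi T s₀ u₀‖ ≤ C * ‖p.2 - u₀‖ + ‖Phi T p.1 u₀ - Phi T s₀ u₀‖ := by
    intro p
    calc ‖Phi T p.1 p.2 - Phi T s₀ u₀‖
        ≤ ‖Phi T p.1 p.2 - Phi T p.1 u₀‖ + ‖Phi T p.1 u₀ - Phi T s₀ u₀‖ :=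
          norm_sub_le_norm_sub_add_norm_sub _ _ _
      _ ≤ C * ‖p.2 - u₀‖ + ‖Phi T p.1 u₀ - Phi T s₀ u₀‖ := by
          gcongr
          exact Phi_lip p.1 p.2 u₀
  have h2 : Filter.Tendsto
      (fun p : ℝ × Lp (EuclideanSpace ℝ (Fin m)) 2 (muT T) =>
        C * ‖p.2 - u₀‖ + ‖Phi T p.1 u₀ - Phi T s₀ u₀‖) (nhds (s₀, u₀)) (nhds 0) := by
    have ha : Filter.Tendsto
        (fun p : ℝ × Lp (EuclideanSpace ℝ (Fin m)) 2 (muT T) => C * ‖p.2 - u₀‖)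
        (nhds (s₀, u₀)) (nhds (C * ‖u₀ - u₀‖)) :=
      (continuous_const.mul ((continuous_snd.sub continuous_const).norm)).tendsto _
    have hb : Filter.Tendsto
        (fun p : ℝ × Lp (EuclideanSpace ℝ (Fin m)) 2 (muT T) =>
          ‖Phi T p.1 u₀ - Phi T s₀ u₀‖) (nhds (s₀, u₀)) (nhds 0) :=
      (Phi_cont_s u₀ s₀).comp (continuous_fst.tendsto (s₀, u₀))
    have hsum := ha.add hb
    simp only [sub_self, norm_zero, mul_zero, zero_add, add_zero] at hsum
    exact hsum
  exact squeeze_zero (fun p => norm_nonneg _) hub h2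

end


/-- The set of stopped controls
`H = { t ↦ (1, u(t)^⊤)^⊤ 1_{[0,s]}(t) : s ∈ [0,T], u ∈ K }` is relatively compact in
`L¹([0,T]; ℝ^{m+1})` (i.e. its closure is compact) whenever `K` is a compact subset of
`L²([0,T]; ℝ^m)`. -/
theorem stmt_14 {m : ℕ} (T : ℝ) (hT : 0 < T)
    (K : Set (Lp (EuclideanSpace ℝ (Fin m)) 2 (volume.restrict (Set.Icc (0:ℝ) T))))
    (hK : IsCompact K)
    (H : Set (Lp (EuclideanSpace ℝ (Fin (m + 1))) 1 (volume.restrict (Set.Icc (0:ℝ) T))))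
    (hH : ∀ h, h ∈ H ↔ ∃ s ∈ Set.Icc (0:ℝ) T, ∃ u ∈ K,
      ∀ᵐ t ∂(volume.restrict (Set.Icc (0:ℝ) T)),
        (⇑h t : Fin (m + 1) → ℝ) =
          Set.indicator (Set.Icc (0:ℝ) s) (fun t' => Fin.cons 1 fun i => (⇑u t') i) t) :
    IsCompact (closure H) := by
  have hincl : H ⊆ (fun p : ℝ × Lp (EuclideanSpace ℝ (Fin m)) 2 (muT T) =>
      Phi T p.1 p.2) '' (Set.Icc (0:ℝ) T ×ˢ K) := by
    intro h hh
    obtain ⟨s, hs, u, hu, hae⟩ := (hH h).mp hh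
    refine ⟨(s, u), Set.mk_mem_prod hs hu, ?_⟩
    apply Lp.ext
    filter_upwards [MemLp.coeFn_toLp (f := (Set.Icc (0:ℝ) s).indicator (gm u))
      ((memLp_gm u).indicator (measurableSet_Icc (a := (0:ℝ)) (b := s))), hae] with t h1 h2
    show (Phi T s u) t = h t
    rw [show ((Phi T s u : Lp (EuclideanSpace ℝ (Fin (m+1))) 1 (muT T)) : ℝ → EuclideanSpace ℝ (Fin (m+1))) t = (Set.Icc (0:ℝ) s).indicator (gm u) t from h1]
    apply WithLp.ofLp_injective 2
    rw [h2]
    by_cases ht : t ∈ Set.Icc (0:ℝ) s <;> simp [Set.indicator_of_mem, Set.indicator_of_notMem, ht, gm]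
  have hcomp : IsCompact ((fun p : ℝ × Lp (EuclideanSpace ℝ (Fin m)) 2 (muT T) =>
      Phi T p.1 p.2) '' (Set.Icc (0:ℝ) T ×ˢ K)) :=
    (isCompact_Icc.prod hK).image Phi_continuous
  exact hcomp.of_isClosed_subset isClosed_closure (closure_minimal hincl hcomp.isClosed)
end
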